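/- arXiv:1909.11073 — 5 statements merged into one kernel-verified Lean document; each statement's English description precedes it below -/
import Mathlib

section
/- Let π, π': [mn] → [mn] be permutations and let A_{π,π'} ∈ F_q^{2n × mn} be the vertical concatenation of A_π and A_{π'}. If the rank deficit 2n - rank(A_{π,π'}) is at least k, then there exist non-empty partitions S_1 ⊔ ... ⊔ S_k = [n] and S'_1 ⊔ ... ⊔ S'_k = [n] such that π(S_j^{→m}) = π'((S'_j)^{→m}) for all j ∈ [k]. -/
/-- The `n × mn` matrix over `F` whose `i`-th row is the indicator vector of
`π({m(i-1)+1, ..., mi})`. -/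
def splitMixMatrix (m n : ℕ) (F : Type) [Field F]
    (π : Equiv.Perm (Fin (m * n))) : Matrix (Fin n) (Fin (m * n)) F :=
  Matrix.of fun (i : Fin n) (j : Fin (m * n)) =>
    if ((π.symm j : Fin (m * n)) : ℕ) / m = (i : ℕ) then (1 : F) else 0

/-- `S^{→m} = ∪_{i ∈ S} {m(i-1)+1, ..., mi}`. -/
def blockSet (m n : ℕ) (S : Finset (Fin n)) : Finset (Fin (m * n)) :=
  Finset.univ.filter (fun j : Fin (m * n) => ∃ i ∈ S, (j : ℕ) / m = (i : ℕ))

section aux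
variable {m n : ℕ}

/-- block index of a column under a permutation -/
def blkIdx (hm : 0 < m) (π : Equiv.Perm (Fin (m * n))) (j : Fin (m * n)) : Fin n :=
  ⟨((π.symm j : Fin (m * n)) : ℕ) / m, Nat.div_lt_of_lt_mul (π.symm j).2⟩

def mixGraph (hm : 0 < m) (π π' : Equiv.Perm (Fin (m * n))) :
    SimpleGraph (Fin n ⊕ Fin n) where
  Adj v w := ∃ j, (v = .inl (blkIdx hm π j) ∧ w = .inr (blkIdx hm π' j)) ∨
                  (w = .inl (blkIdx hm π j) ∧ v = .inr (blkIdx hm π' j))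
  symm := by constructor; rintro v w ⟨j, h | h⟩ <;> exact ⟨j, by tauto⟩
  loopless := by constructor; rintro v ⟨j, ⟨h1, h2⟩ | ⟨h1, h2⟩⟩ <;> simp_all

lemma mixGraph_adj (hm : 0 < m) (π π' : Equiv.Perm (Fin (m * n))) (j : Fin (m * n)) :
    (mixGraph hm π π').Adj (.inl (blkIdx hm π j)) (.inr (blkIdx hm π' j)) :=
  ⟨j, Or.inl ⟨rfl, rfl⟩⟩

end aux

theorem stmt5 (m n k : ℕ) (hm : 0 < m) (hn : 0 < n) (hk : 0 < k)
    (F : Type) [Field F] [Fintype F]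
    (π π' : Equiv.Perm (Fin (m * n)))
    (hdef : k ≤ 2 * n -
      (Matrix.fromRows (splitMixMatrix m n F π) (splitMixMatrix m n F π')).rank) :
    ∃ S S' : Fin k → Finset (Fin n),
      (∀ j, (S j).Nonempty) ∧ (∀ j, (S' j).Nonempty) ∧
      (∀ j j', j ≠ j' → Disjoint (S j) (S j')) ∧
      (∀ j j', j ≠ j' → Disjoint (S' j) (S' j')) ∧
      Finset.univ.biUnion S = Finset.univ ∧
      Finset.univ.biUnion S' = Finset.univ ∧
      ∀ j, (blockSet m n (S j)).image π = (blockSet m n (S' j)).image π' := by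
  classical
  set M := Matrix.fromRows (splitMixMatrix m n F π) (splitMixMatrix m n F π') with hM
  set G := mixGraph (n := n) hm π π' with hG
  set Q := G.ConnectedComponent with hQ
  haveI : Fintype Q := Fintype.ofFinite Q
  -- the linear map whose kernel we study
  set f := M.transpose.mulVecLin with hf
  -- kernel elements alternate sign along edges
  have hker_edge : ∀ x ∈ LinearMap.ker f, ∀ j : Fin (m * n),
      x (Sum.inl (blkIdx hm π j)) + x (Sum.inr (blkIdx hm π' j)) = 0 := by
    intro x hx j
    have h0 : f x j = 0 := by rw [LinearMap.mem_ker] at hx; rw [hx]; rfl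
    have : f x j = x (Sum.inl (blkIdx hm π j)) + x (Sum.inr (blkIdx hm π' j)) := by
      show (M.transpose.mulVec x) j = _
      simp only [Matrix.mulVec, dotProduct, Fintype.sum_sum_type, Matrix.transpose_apply]
      have e1 : ∀ i : Fin n, M (Sum.inl i) j * x (Sum.inl i)
          = if i = blkIdx hm π j then x (Sum.inl i) else 0 := by
        intro i
        rw [hM]
        simp only [Matrix.fromRows_apply_inl, Matrix.fromRows_apply_inr, splitMixMatrix, Matrix.of_apply, Sum.elim_inl, Sum.elim_inr]
        by_cases h : ((π.symm j : Fin (m*n)) : ℕ) / m = (i : ℕ)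
        · rw [if_pos h, if_pos (by apply Fin.ext; simp [blkIdx, h]), one_mul]
        · rw [if_neg h, if_neg (by intro hc; apply h; rw [hc]; rfl), zero_mul]
      have e2 : ∀ i : Fin n, M (Sum.inr i) j * x (Sum.inr i)
          = if i = blkIdx hm π' j then x (Sum.inr i) else 0 := by
        intro i
        rw [hM]
        simp only [Matrix.fromRows_apply_inl, Matrix.fromRows_apply_inr, splitMixMatrix, Matrix.of_apply, Sum.elim_inl, Sum.elim_inr]
        by_cases h : ((π'.symm j : Fin (m*n)) : ℕ) / m = (i : ℕ)
        · rw [if_pos h, if_pos (by apply Fin.ext; simp [blkIdx, h]), one_mul]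
        · rw [if_neg h, if_neg (by intro hc; apply h; rw [hc]; rfl), zero_mul]
      rw [Finset.sum_congr rfl (fun i _ => e1 i), Finset.sum_congr rfl (fun i _ => e2 i),
        Finset.sum_ite_eq' Finset.univ, Finset.sum_ite_eq' Finset.univ]
      simp
    rw [this] at h0; exact h0
  have hker_reach : ∀ x ∈ LinearMap.ker f, ∀ v w, G.Reachable v w →
      x w = x v ∨ x w = -x v := by
    intro x hx v w hr
    obtain ⟨p⟩ := hr
    induction p with
    | nil => exact Or.inl rfl
    | @cons a b c hadj p ih =>
      have hab : x b = -x a := by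
        obtain ⟨j, ⟨h1, h2⟩ | ⟨h1, h2⟩⟩ := hadj
        · rw [h1, h2]; exact eq_neg_of_add_eq_zero_right (hker_edge x hx j)
        · rw [h1, h2]; exact eq_neg_of_add_eq_zero_left (hker_edge x hx j)
      rcases ih with h | h
      · rw [h, hab]; exact Or.inr rfl
      · rw [h, hab, neg_neg]; exact Or.inl rfl
  -- the kernel injects into Q → F
  have hdim : Module.finrank F (LinearMap.ker f) ≤ Fintype.card Q := by
    have : Module.finrank F (Q → F) = Fintype.card Q := Module.finrank_pi F
    rw [← this]
    set g : (LinearMap.ker f) →ₗ[F] (Q → F) :=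
      { toFun := fun x => fun q => (x : (Fin n ⊕ Fin n) → F) q.out
        map_add' := fun x y => rfl
        map_smul' := fun c x => rfl } with hg
    apply LinearMap.finrank_le_finrank_of_injective (f := g)
    rw [injective_iff_map_eq_zero]
    intro x hx0
    ext v
    have hreach : G.Reachable v (G.connectedComponentMk v).out := by
      apply (SimpleGraph.ConnectedComponent.eq (G := G)).mp
      exact ((G.connectedComponentMk v).out_eq).symm
    have h0 : (x : (Fin n ⊕ Fin n) → F) (G.connectedComponentMk v).out = 0 := by
      have := congrFun hx0 (G.connectedComponentMk v)
      exact this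
    rcases hker_reach (x : (Fin n ⊕ Fin n) → F) x.2 (G.connectedComponentMk v).out v
        hreach.symm with h | h
    · simp [h, h0]
    · simp [h, h0]
  -- k ≤ card Q
  have hcard : k ≤ Fintype.card Q := by
    have hrn := LinearMap.finrank_range_add_finrank_ker f
    have hdom : Module.finrank F ((Fin n ⊕ Fin n) → F) = 2 * n := by
      rw [Module.finrank_pi F]; simp; ring
    have hrk : M.rank = Module.finrank F (LinearMap.range f) := by
      rw [← Matrix.rank_transpose M]; rfl
    omega
  -- pick an embedding of Fin k into Q
  obtain ⟨e⟩ : Nonempty (Fin k ↪ Q) := by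
    apply Function.Embedding.nonempty_of_card_le
    simpa using hcard
  -- retraction
  set r : Q → Fin k := fun q => if h : ∃ j, e j = q then h.choose else ⟨0, hk⟩ with hr
  have hre : ∀ j, r (e j) = j := by
    intro j
    have h : ∃ j', e j' = e j := ⟨j, rfl⟩
    rw [hr]; simp only [dif_pos h]
    exact e.injective h.choose_spec
  set S : Fin k → Finset (Fin n) :=
    fun j => Finset.univ.filter (fun i => r (G.connectedComponentMk (Sum.inl i)) = j) with hS
  set S' : Fin k → Finset (Fin n) :=
    fun j => Finset.univ.filter (fun i => r (G.connectedComponentMk (Sum.inr i)) = j) with hS'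
  -- each component contains vertices of both types
  have hblk : ∀ (σ : Equiv.Perm (Fin (m*n))) (i : Fin n),
      blkIdx hm σ (σ ⟨m * (i : ℕ), by
        have : (i:ℕ) < n := i.2
        calc m * (i:ℕ) < m * n := by exact (Nat.mul_lt_mul_left hm).mpr this
        ⟩) = i := by
    intro σ i
    apply Fin.ext
    simp [blkIdx, Nat.mul_div_cancel_left _ hm]
  have hboth : ∀ q : Q, (∃ i, G.connectedComponentMk (Sum.inl i) = q) ∧
      (∃ i, G.connectedComponentMk (Sum.inr i) = q) := by
    intro q
    induction q using SimpleGraph.ConnectedComponent.ind with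
    | h v =>
      rcases v with i | i
      · refine ⟨⟨i, rfl⟩, ?_⟩
        set j := π ⟨m * (i : ℕ), by calc m * (i:ℕ) < m * n := (Nat.mul_lt_mul_left hm).mpr i.2⟩ with hj
        refine ⟨blkIdx hm π' j, ?_⟩
        have hadj := mixGraph_adj hm π π' j
        rw [hblk π i] at hadj
        exact (SimpleGraph.ConnectedComponent.sound hadj.reachable).symm
      · refine ⟨?_, ⟨i, rfl⟩⟩
        set j := π' ⟨m * (i : ℕ), by calc m * (i:ℕ) < m * n := (Nat.mul_lt_mul_left hm).mpr i.2⟩ with hj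
        refine ⟨blkIdx hm π j, ?_⟩
        have hadj := mixGraph_adj hm π π' j
        rw [hblk π' i] at hadj
        exact SimpleGraph.ConnectedComponent.sound hadj.reachable
  refine ⟨S, S', ?_, ?_, ?_, ?_, ?_, ?_, ?_⟩
  · intro j
    obtain ⟨⟨i, hi⟩, _⟩ := hboth (e j)
    exact ⟨i, by rw [hS]; simp [hi, hre j]⟩
  · intro j
    obtain ⟨_, ⟨i, hi⟩⟩ := hboth (e j)
    exact ⟨i, by rw [hS']; simp [hi, hre j]⟩
  · intro j j' hjj
    rw [Finset.disjoint_filter]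
    intro i _ h1 h2
    exact hjj (h1 ▸ h2 ▸ rfl)
  · intro j j' hjj
    rw [Finset.disjoint_filter]
    intro i _ h1 h2
    exact hjj (h1 ▸ h2 ▸ rfl)
  · ext i
    simp only [Finset.mem_biUnion, Finset.mem_univ, iff_true, true_and]
    exact ⟨r (G.connectedComponentMk (Sum.inl i)), by simp [hS]⟩
  · ext i
    simp only [Finset.mem_biUnion, Finset.mem_univ, iff_true, true_and]
    exact ⟨r (G.connectedComponentMk (Sum.inr i)), by simp [hS']⟩
  · intro j
    have key : ∀ c : Fin (m * n),
        G.connectedComponentMk (Sum.inl (blkIdx hm π c)) =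
        G.connectedComponentMk (Sum.inr (blkIdx hm π' c)) :=
      fun c => SimpleGraph.ConnectedComponent.sound (mixGraph_adj hm π π' c).reachable
    ext c
    have hmemS : ∀ (σ : Equiv.Perm (Fin (m*n))) (T : Finset (Fin n)),
        (c ∈ (blockSet m n T).image σ ↔ blkIdx hm σ c ∈ T) := by
      intro σ T
      rw [Finset.mem_image]
      constructor
      · rintro ⟨p, hp, rfl⟩
        rw [blockSet, Finset.mem_filter] at hp
        obtain ⟨-, i, hi, hdiv⟩ := hp
        have : blkIdx hm σ (σ p) = i := by apply Fin.ext; simpa [blkIdx] using hdiv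
        rwa [this]
      · intro hmem
        refine ⟨σ.symm c, ?_, by simp⟩
        rw [blockSet, Finset.mem_filter]
        exact ⟨Finset.mem_univ _, blkIdx hm σ c, hmem, rfl⟩
    rw [hmemS π (S j), hmemS π' (S' j), hS, hS']
    simp only [Finset.mem_filter, Finset.mem_univ, true_and]
    rw [key c]
end

section
/- For independent uniformly random permutations π, π' of [mn] with m ≥ 3, the probability that the rank deficit 2n - rank(A_{π,π'}) of the matrix A_{π,π'} over F_q is at least k is at most (n^2 / (n/2)^{m-2})^{(k-1)/2}. -/
namespace SplitMix

open scoped Classical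

/-- the block of an element: `y / m`. -/
def blk {m n : ℕ} (y : Fin (m*n)) : Fin n :=
  ⟨(y : ℕ) / m, by
    have h := y.isLt
    have hm : 0 < m := by
      rcases Nat.eq_zero_or_pos m with h0 | h0
      · subst h0; simp at h
      · exact h0
    exact (Nat.div_lt_iff_lt_mul hm).mpr (by rw [mul_comm n m]; exact h)⟩



/-- `N ≤ C(N, a)` for `1 ≤ a ≤ N - 1`. -/
lemma le_choose (N a : ℕ) (h1 : 1 ≤ a) (h2 : a + 1 ≤ N) : N ≤ N.choose a := by
  induction N generalizing a with
  | zero => omega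
  | succ N ih =>
    rcases Nat.eq_or_lt_of_le h1 with h | h
    · subst h; simp [Nat.choose_one_right]
    · obtain ⟨b, rfl⟩ : ∃ b, a = b + 1 := ⟨a - 1, by omega⟩
      rw [Nat.choose_succ_succ]
      simp only [Nat.succ_eq_add_one]
      have hle : N ≤ N.choose b := ih b (by omega) (by omega)
      have hpos : 0 < N.choose (b+1) := Nat.choose_pos (by omega)
      omega

/-- products of prefix sums shifted by `c` -/
def qlist : ℕ → List ℕ → ℕ
  | _, [] => 1
  | c, a :: t => (c + a) * qlist (c + a) t

lemma qlist_factorial : ∀ (l : List ℕ) (c : ℕ), 1 ≤ c → (∀ x ∈ l, 1 ≤ x) →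
    c.factorial * (l.map Nat.factorial).prod * qlist c l ≤ (c + l.sum).factorial := by
  intro l
  induction l with
  | nil => intro c _ _; simp [qlist]
  | cons a t ih =>
    intro c hc hx
    have ha : 1 ≤ a := hx a List.mem_cons_self
    have key : c.factorial * a.factorial * (c + a) ≤ (c + a).factorial := by
      have h1 : (c+a).choose a * a.factorial * c.factorial = (c+a).factorial := by
        have := Nat.choose_mul_factorial_mul_factorial (n := c + a) (k := a) (by omega)
        simpa [Nat.add_sub_cancel] using this
      have h2 : c + a ≤ (c+a).choose a := le_choose _ _ ha (by omega)
      calc c.factorial * a.factorial * (c + a)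
          ≤ c.factorial * a.factorial * ((c+a).choose a) := Nat.mul_le_mul_left _ h2
        _ = (c+a).choose a * a.factorial * c.factorial := by ring
        _ = (c+a).factorial := h1
    have iht := ih (c + a) (by omega) (fun x hxt => hx x (List.mem_cons_of_mem _ hxt))
    calc c.factorial * ((a :: t).map Nat.factorial).prod * qlist c (a :: t)
        = (c.factorial * a.factorial * (c + a)) *
            ((t.map Nat.factorial).prod * qlist (c+a) t) := by
          simp [qlist, List.map_cons]; ring
      _ ≤ (c+a).factorial * ((t.map Nat.factorial).prod * qlist (c+a) t) :=
          Nat.mul_le_mul_right _ key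
      _ = (c+a).factorial * (t.map Nat.factorial).prod * qlist (c+a) t := by ring
      _ ≤ (c + a + t.sum).factorial := iht
      _ = (c + (a :: t).sum).factorial := by simp [List.sum_cons]; ring_nf




lemma qlist_eq_prod : ∀ (l : List ℕ) (c : ℕ),
    qlist c l = ∏ j ∈ Finset.range l.length, (c + (l.take (j+1)).sum) := by
  intro l
  induction l with
  | nil => intro c; simp [qlist]
  | cons a t ih =>
    intro c
    rw [List.length_cons, Finset.prod_range_succ']
    simp only [List.take_succ_cons, List.sum_cons]
    rw [qlist, ih (c + a)]
    have : ∀ j, c + (a + (t.take (j+1)).sum) = c + a + (t.take (j+1)).sum := by omega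
    simp only [this]
    have h0 : c + (a + (t.take 0).sum) = c + a := by simp
    rw [h0, mul_comm]

lemma length_le_sum : ∀ (l : List ℕ), (∀ x ∈ l, 1 ≤ x) → l.length ≤ l.sum := by
  intro l
  induction l with
  | nil => simp
  | cons a t ih =>
    intro h
    have := ih (fun x hx => h x (List.mem_cons_of_mem _ hx))
    have := h a List.mem_cons_self
    simp only [List.length_cons, List.sum_cons]
    omega

lemma qlist_sq_ge (l : List ℕ) (c : ℕ) (hall : ∀ x ∈ l, 1 ≤ x)
    (hbig : c + l.sum ≤ c * (l.length + 1)) :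
    (c + l.sum) ^ l.length ≤ (qlist c l) ^ 2 := by
  classical
  set r := l.length with hr
  set F : ℕ → ℕ := fun j => c + (l.take (j+1)).sum with hF
  have hq : qlist c l = ∏ j ∈ Finset.range r, F j := qlist_eq_prod l c
  have hlow : ∀ j < r, c + (j+1) ≤ F j := by
    intro j hj
    have hlen : (l.take (j+1)).length = j + 1 := by
      rw [List.length_take]; omega
    have : (l.take (j+1)).length ≤ (l.take (j+1)).sum :=
      length_le_sum _ (fun x hx => hall x (List.mem_of_mem_take hx))
    simp only [hF]
    omega
  have hhigh : ∀ j, F j ≤ c + l.sum := by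
    intro j
    have : (l.take (j+1)).sum ≤ l.sum := by
      conv_rhs => rw [← List.take_append_drop (j+1) l]
      rw [List.sum_append]
      omega
    simp only [hF]; omega
  have hsq : (qlist c l) ^ 2 = ∏ j ∈ Finset.range r, (F j * F (r - 1 - j)) := by
    rw [hq, sq, Finset.prod_mul_distrib]
    congr 1
    exact (Finset.prod_range_reflect F r).symm
  rw [hsq]
  have : ∀ j ∈ Finset.range r, c + l.sum ≤ F j * F (r - 1 - j) := by
    intro j hj
    rw [Finset.mem_range] at hj
    have h1 : c + (j+1) ≤ F j := hlow j hj
    have h2 : c + (r - j) ≤ F (r - 1 - j) := by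
      have := hlow (r - 1 - j) (by omega)
      have : c + (r - 1 - j + 1) ≤ F (r - 1 - j) := this
      have heq : r - 1 - j + 1 = r - j := by omega
      omega
    have key : c * (r + 1) ≤ (c + (j+1)) * (c + (r - j)) := by
      have h3 : (j + 1) + (r - j) = r + 1 := by omega
      nlinarith [Nat.zero_le c, Nat.zero_le j]
    calc c + l.sum ≤ c * (r + 1) := hbig
      _ ≤ (c + (j+1)) * (c + (r - j)) := key
      _ ≤ F j * F (r - 1 - j) := Nat.mul_le_mul h1 h2
  calc (c + l.sum) ^ r = ∏ _j ∈ Finset.range r, (c + l.sum) := by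
        rw [Finset.prod_const, Finset.card_range]
    _ ≤ ∏ j ∈ Finset.range r, (F j * F (r - 1 - j)) := Finset.prod_le_prod' this
  done






lemma one_le_qlist : ∀ (l : List ℕ) (c : ℕ), (∀ x ∈ l, 1 ≤ x) → 1 ≤ qlist c l := by
  intro l
  induction l with
  | nil => intro c _; exact le_refl 1
  | cons a t ih =>
    intro c h
    have ha : 1 ≤ a := h a List.mem_cons_self
    have h2 := ih (c + a) (fun x hx => h x (List.mem_cons_of_mem _ hx))
    calc 1 = 1 * 1 := by norm_num
      _ ≤ (c + a) * qlist (c + a) t := Nat.mul_le_mul (by omega) h2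

lemma mult_exists (k n : ℕ) (hk : 0 < k) (s : Fin k → ℕ) (h1 : ∀ t, 1 ≤ s t)
    (hsum : ∑ t, s t = n) :
    ∃ Q : ℕ, 1 ≤ Q ∧ (∏ t, (s t).factorial) * Q ≤ n.factorial ∧ n ^ (k-1) ≤ Q^2 := by
  classical
  obtain ⟨t₀, -, hmax⟩ := Finset.exists_max_image (Finset.univ : Finset (Fin k)) s
    ⟨⟨0, hk⟩, Finset.mem_univ _⟩
  set c := s t₀ with hc
  set l : List ℕ := (Finset.univ.erase t₀).toList.map s with hl
  have hmem : ∀ x ∈ l, 1 ≤ x := by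
    intro x hx
    rw [hl, List.mem_map] at hx
    obtain ⟨t, -, rfl⟩ := hx
    exact h1 t
  have hlen : l.length = k - 1 := by
    rw [hl, List.length_map, Finset.length_toList, Finset.card_erase_of_mem (Finset.mem_univ _)]
    simp
  have hsuml : c + l.sum = n := by
    rw [hl]
    have : (((Finset.univ.erase t₀).toList.map s)).sum = ∑ t ∈ Finset.univ.erase t₀, s t := by
      rw [Finset.sum_map_toList]
    rw [this, Finset.add_sum_erase _ s (Finset.mem_univ t₀), hsum]
  have hprodl : (l.map Nat.factorial).prod = ∏ t ∈ Finset.univ.erase t₀, (s t).factorial := by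
    rw [hl, List.map_map, Finset.prod_map_toList]
    rfl
  have hprod : c.factorial * (l.map Nat.factorial).prod = ∏ t, (s t).factorial := by
    rw [hprodl]
    exact Finset.mul_prod_erase Finset.univ (fun t => (s t).factorial) (Finset.mem_univ t₀)
  have hbig : c + l.sum ≤ c * (l.length + 1) := by
    rw [hsuml, hlen]
    have : n ≤ k * c := by
      rw [← hsum]
      calc ∑ t, s t ≤ ∑ _t : Fin k, c := Finset.sum_le_sum (fun t _ => hmax t (Finset.mem_univ t))
        _ = k * c := by rw [Finset.sum_const, Finset.card_univ, Fintype.card_fin, smul_eq_mul]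
    have hkk : k - 1 + 1 = k := by omega
    rw [hkk, mul_comm c k]
    exact this
  refine ⟨qlist c l, one_le_qlist l c hmem, ?_, ?_⟩
  · rw [← hprod]
    calc c.factorial * (l.map Nat.factorial).prod * qlist c l ≤ (c + l.sum).factorial :=
          qlist_factorial l c (h1 t₀) hmem
      _ = n.factorial := by rw [hsuml]
  · have := qlist_sq_ge l c hmem hbig
    rw [hsuml, hlen] at this
    exact this



lemma choose_pow_le (N s M : ℕ) (h : s ≤ N) : (N.choose s) ^ M ≤ (M * N).choose (M * s) := by
  classical
  let D := Fin M → {A : Finset (Fin N) // A ∈ Finset.powersetCard s (Finset.univ : Finset (Fin N))}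
  let T := {B : Finset (Fin M × Fin N) //
    B ∈ Finset.powersetCard (M * s) (Finset.univ : Finset (Fin M × Fin N))}
  have cardD : Fintype.card D = (N.choose s) ^ M := by
    rw [Fintype.card_fun, Fintype.card_coe, Finset.card_powersetCard, Finset.card_univ,
      Fintype.card_fin, Fintype.card_fin]
  have cardT : Fintype.card T = (M * N).choose (M * s) := by
    rw [Fintype.card_coe, Finset.card_powersetCard, Finset.card_univ, Fintype.card_prod,
      Fintype.card_fin, Fintype.card_fin]
  have hinj : ∃ Φ : D → T, Function.Injective Φ := by
    refine ⟨fun A => ⟨Finset.univ.filter (fun p => p.2 ∈ (A p.1).1), ?_⟩, ?_⟩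
    · rw [Finset.mem_powersetCard]
      constructor
      · exact Finset.filter_subset _ _
      · rw [Finset.card_filter]
        rw [Fintype.sum_prod_type]
        have : ∀ i : Fin M, (∑ j : Fin N, if j ∈ (A i).1 then 1 else 0) = s := by
          intro i
          have hc := (Finset.mem_powersetCard.mp (A i).2).2
          simp only [Finset.sum_ite_mem, Finset.univ_inter, Finset.sum_const, smul_eq_mul,
            mul_one]
          exact hc
        rw [Finset.sum_congr rfl (fun i _ => this i), Finset.sum_const, Finset.card_univ,
          Fintype.card_fin, smul_eq_mul]
    · intro A A' hAA
      funext i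
      apply Subtype.ext
      apply Finset.ext
      intro a
      have := congrArg (fun (B : T) => (i, a) ∈ B.1) hAA
      simpa using this
  obtain ⟨Φ, hΦ⟩ := hinj
  calc (N.choose s) ^ M = Fintype.card D := cardD.symm
    _ ≤ Fintype.card T := Fintype.card_le_of_injective Φ hΦ
    _ = (M * N).choose (M * s) := cardT

lemma vandermonde {ι : Type*} [DecidableEq ι] (M : ℕ) (f : ι → ℕ) (A : Finset ι) :
    ((∑ t ∈ A, f t).factorial) ^ M * ∏ t ∈ A, (M * f t).factorial ≤
      (M * ∑ t ∈ A, f t).factorial * ∏ t ∈ A, ((f t).factorial) ^ M := by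
  classical
  induction A using Finset.induction_on with
  | empty => simp
  | insert a A ha ih =>
    rw [Finset.sum_insert ha, Finset.prod_insert ha, Finset.prod_insert ha]
    set s := f a
    set N := ∑ t ∈ A, f t
    have star : ((s+N).factorial) ^ M * (M*s).factorial * (M*N).factorial ≤
        (M*(s+N)).factorial * (s.factorial) ^ M * (N.factorial) ^ M := by
      have hCb := Nat.choose_mul_factorial_mul_factorial (n := s + N) (k := s) (by omega)
      rw [Nat.add_sub_cancel_left] at hCb
      have hCm := Nat.choose_mul_factorial_mul_factorial (n := M*(s+N)) (k := M*s)
        (Nat.mul_le_mul_left _ (by omega))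
      have hsub : M*(s+N) - M*s = M*N := by
        rw [Nat.mul_add]; omega
      rw [hsub] at hCm
      have hpow := choose_pow_le (s+N) s M (by omega)
      calc ((s+N).factorial) ^ M * (M*s).factorial * (M*N).factorial
          = ((s+N).choose s * s.factorial * N.factorial)^M * (M*s).factorial * (M*N).factorial
            := by rw [hCb]
        _ = ((s+N).choose s)^M * ((M*s).factorial * (M*N).factorial)
              * ((s.factorial)^M * (N.factorial)^M) := by rw [mul_pow, mul_pow]; ring
        _ ≤ ((M*(s+N)).choose (M*s)) * ((M*s).factorial * (M*N).factorial)
              * ((s.factorial)^M * (N.factorial)^M) :=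
            Nat.mul_le_mul_right _ (Nat.mul_le_mul_right _ hpow)
        _ = ((M*(s+N)).choose (M*s) * (M*s).factorial * (M*N).factorial)
              * ((s.factorial)^M * (N.factorial)^M) := by ring
        _ = (M*(s+N)).factorial * (s.factorial) ^ M * (N.factorial) ^ M := by rw [hCm]; ring
    have hposfac : 0 < (M*N).factorial * (N.factorial)^M :=
      Nat.mul_pos (Nat.factorial_pos _) (Nat.pow_pos (Nat.factorial_pos _))
    apply Nat.le_of_mul_le_mul_right _ hposfac
    calc ((s+N).factorial ^ M * ((M*s).factorial * ∏ t ∈ A, (M * f t).factorial))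
          * ((M*N).factorial * (N.factorial)^M)
        = ((s+N).factorial ^ M * (M*s).factorial * (M*N).factorial)
            * ((N.factorial)^M * ∏ t ∈ A, (M * f t).factorial) := by ring
      _ ≤ ((M*(s+N)).factorial * (s.factorial) ^ M * (N.factorial) ^ M)
            * ((N.factorial)^M * ∏ t ∈ A, (M * f t).factorial) := by
          apply Nat.mul_le_mul_right _ star
      _ = ((M*(s+N)).factorial * (s.factorial) ^ M)
            * ((N.factorial) ^ M * ((N.factorial)^M * ∏ t ∈ A, (M * f t).factorial)) := by ring
      _ = ((M*(s+N)).factorial * (s.factorial) ^ M)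
            * ((N.factorial) ^ M * ((N.factorial)^M * ∏ t ∈ A, (M * f t).factorial)) := rfl
      _ ≤ ((M*(s+N)).factorial * (s.factorial) ^ M)
            * ((N.factorial) ^ M * ((M*N).factorial * ∏ t ∈ A, ((f t).factorial) ^ M)) := by
          apply Nat.mul_le_mul_left
          apply Nat.mul_le_mul_left
          exact ih
      _ = ((M*(s+N)).factorial * ((s.factorial) ^ M * ∏ t ∈ A, ((f t).factorial) ^ M))
            * ((M*N).factorial * (N.factorial)^M) := by ring




/-- the block of an element: `y / m`. -/

lemma pair_lt {m n : ℕ} (a : Fin m) (i : Fin n) : (a : ℕ) + m * (i : ℕ) < m * n := by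
  calc (a : ℕ) + m * (i : ℕ) < m + m * (i : ℕ) := by have := a.isLt; omega
    _ = m * ((i : ℕ) + 1) := by ring
    _ ≤ m * n := Nat.mul_le_mul_left m i.isLt

/-- inverse of the block map -/
def unblk {m n : ℕ} (a : Fin m) (i : Fin n) : Fin (m*n) := ⟨(a : ℕ) + m * (i : ℕ), pair_lt a i⟩

lemma blk_unblk {m n : ℕ} (a : Fin m) (i : Fin n) : blk (unblk a i) = i := by
  have hm : 0 < m := a.pos
  apply Fin.ext
  show ((a : ℕ) + m * (i : ℕ)) / m = (i : ℕ)
  rw [Nat.add_mul_div_left _ _ hm, Nat.div_eq_of_lt a.isLt, Nat.zero_add]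

lemma mod_unblk {m n : ℕ} (a : Fin m) (i : Fin n) : ((unblk a i : Fin (m*n)) : ℕ) % m = a := by
  show ((a : ℕ) + m * (i : ℕ)) % m = a
  rw [Nat.add_mul_mod_self_left, Nat.mod_eq_of_lt a.isLt]

/-- fibers of `g ∘ blk` have size `m` times fibers of `g`. -/
lemma card_blk_fiber {m n k : ℕ} (hm : 0 < m) (g : Fin n → Fin k) (t : Fin k) :
    Fintype.card {y : Fin (m*n) // g (blk y) = t} =
      m * Fintype.card {i : Fin n // g i = t} := by
  have e : {y : Fin (m*n) // g (blk y) = t} ≃ ({i : Fin n // g i = t} × Fin m) :=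
    { toFun := fun y => (⟨blk y.1, y.2⟩, ⟨(y.1 : ℕ) % m, Nat.mod_lt _ hm⟩)
      invFun := fun p => ⟨unblk p.2 p.1.1, by rw [blk_unblk]; exact p.1.2⟩
      left_inv := by
        intro y
        apply Subtype.ext
        apply Fin.ext
        show ((y.1 : ℕ) % m) + m * ((y.1 : ℕ) / m) = (y.1 : ℕ)
        exact Nat.mod_add_div _ _
      right_inv := by
        intro p
        apply Prod.ext
        · exact Subtype.ext (blk_unblk p.2 p.1.1)
        · exact Fin.ext (mod_unblk p.2 p.1.1) }
  rw [Fintype.card_congr e, Fintype.card_prod, Fintype.card_fin, mul_comm]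

lemma descFactorial_le_factorial (N j : ℕ) : N.descFactorial j ≤ N.factorial := by
  rcases le_or_gt j N with h | h
  · have := Nat.factorial_mul_descFactorial h
    nlinarith [Nat.factorial_pos (N - j)]
  · rw [Nat.descFactorial_eq_zero_iff_lt.mpr h]
    exact Nat.zero_le _

/-- counting permutations compatible with a pair of colorings -/
lemma card_sigma_le {m n k : ℕ} (hm : 0 < m) (f f' : Fin n → Fin k) :
    Fintype.card {σ : Equiv.Perm (Fin (m*n)) // ∀ y, f (blk (σ y)) = f' (blk y)} ≤
      ∏ t, (m * Fintype.card {i : Fin n // f i = t}).factorial := by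
  set A := fun t => {y : Fin (m*n) // f (blk y) = t}
  set B := fun t => {y : Fin (m*n) // f' (blk y) = t}
  have key : Fintype.card {σ : Equiv.Perm (Fin (m*n)) // ∀ y, f (blk (σ y)) = f' (blk y)} ≤
      Fintype.card (∀ t, B t ↪ A t) := by
    apply Fintype.card_le_of_injective
      (fun σ => fun t => ⟨fun y => ⟨σ.1 y.1, by rw [σ.2 y.1]; exact y.2⟩,
        fun y z h => Subtype.ext (σ.1.injective (congrArg Subtype.val h))⟩)
    intro σ τ h
    apply Subtype.ext
    apply Equiv.ext
    intro y
    have := congrFun h (f' (blk y))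
    have h2 := congrArg (fun (e : B (f' (blk y)) ↪ A (f' (blk y))) =>
      (e ⟨y, rfl⟩ : A (f' (blk y))).1) this
    exact h2
  calc Fintype.card {σ : Equiv.Perm (Fin (m*n)) // ∀ y, f (blk (σ y)) = f' (blk y)}
      ≤ Fintype.card (∀ t, B t ↪ A t) := key
    _ = ∏ t, Fintype.card (B t ↪ A t) := Fintype.card_pi
    _ = ∏ t, (Fintype.card (A t)).descFactorial (Fintype.card (B t)) := by
        apply Finset.prod_congr rfl
        intro t _
        exact Fintype.card_embedding_eq
    _ ≤ ∏ t, (Fintype.card (A t)).factorial :=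
        Finset.prod_le_prod' (fun t _ => descFactorial_le_factorial _ _)
    _ = ∏ t, (m * Fintype.card {i : Fin n // f i = t}).factorial := by
        apply Finset.prod_congr rfl
        intro t _
        rw [card_blk_fiber hm f t]





lemma card_pair_event {m n k : ℕ} (f f' : Fin n → Fin k) :
    Fintype.card {p : Equiv.Perm (Fin (m*n)) × Equiv.Perm (Fin (m*n)) //
        ∀ x, f (blk (p.1.symm x)) = f' (blk (p.2.symm x))} =
      (m*n).factorial *
        Fintype.card {σ : Equiv.Perm (Fin (m*n)) // ∀ y, f (blk (σ y)) = f' (blk y)} := by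
  have E : {p : Equiv.Perm (Fin (m*n)) × Equiv.Perm (Fin (m*n)) //
        ∀ x, f (blk (p.1.symm x)) = f' (blk (p.2.symm x))} ≃
      (Equiv.Perm (Fin (m*n)) × {σ : Equiv.Perm (Fin (m*n)) // ∀ y, f (blk (σ y)) = f' (blk y)}) :=
    { toFun := fun p => (p.1.1, ⟨p.1.2.trans p.1.1.symm, by
        intro y
        have h := p.2 (p.1.2 y)
        rw [Equiv.symm_apply_apply] at h
        exact h⟩)
      invFun := fun q => ⟨(q.1, q.2.1.trans q.1), by
        intro x
        have h := q.2.2 (q.2.1.symm (q.1.symm x))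
        rw [Equiv.apply_symm_apply] at h
        rw [h]
        congr 1⟩
      left_inv := by
        intro p
        apply Subtype.ext
        apply Prod.ext
        · rfl
        · show (p.1.2.trans p.1.1.symm).trans p.1.1 = p.1.2
          apply Equiv.ext
          intro y
          simp
      right_inv := by
        intro q
        apply Prod.ext
        · rfl
        · apply Subtype.ext
          show (q.2.1.trans q.1).trans q.1.symm = q.2.1
          apply Equiv.ext
          intro y
          simp }
  rw [Fintype.card_congr E, Fintype.card_prod, Fintype.card_perm, Fintype.card_fin]

def matchPhi {n k : ℕ} (s : Fin k → ℕ) (f : Fin n → Fin k)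
    (e : ∀ t, ({i : Fin n // f i = t} ≃ Fin (s t))) : Fin n ≃ Σ t : Fin k, Fin (s t) :=
  (Equiv.sigmaFiberEquiv f).symm.trans (Equiv.sigmaCongrRight e)

lemma matchPhi_apply {n k : ℕ} (s : Fin k → ℕ) (f : Fin n → Fin k)
    (e : ∀ t, ({i : Fin n // f i = t} ≃ Fin (s t))) (i : Fin n) :
    matchPhi s f e i = ⟨f i, e (f i) ⟨i, rfl⟩⟩ := rfl

lemma match_count {n k : ℕ} (s : Fin k → ℕ) :
    Fintype.card {f : Fin n → Fin k // ∀ t, Fintype.card {i : Fin n // f i = t} = s t} *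
      ∏ t, (s t).factorial ≤ n.factorial := by
  set Sub := {f : Fin n → Fin k // ∀ t, Fintype.card {i : Fin n // f i = t} = s t}
  set W := Σ f : Sub, ∀ t, ({i : Fin n // f.1 i = t} ≃ Fin (s t))
  -- the bijection associated to (f, e)
  let Φdef : ∀ w : W, (Fin n ≃ Σ t : Fin k, Fin (s t)) :=
    fun w => matchPhi s w.1.1 w.2
  have cardW : Fintype.card W = Fintype.card Sub * ∏ t, (s t).factorial := by
    rw [Fintype.card_sigma]
    have : ∀ f : Sub, Fintype.card (∀ t, ({i : Fin n // f.1 i = t} ≃ Fin (s t)))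
        = ∏ t, (s t).factorial := by
      intro f
      rw [Fintype.card_pi]
      apply Finset.prod_congr rfl
      intro t _
      have e : {i : Fin n // f.1 i = t} ≃ Fin (s t) :=
        Fintype.equivFinOfCardEq (f.2 t)
      rw [Fintype.card_equiv e, f.2 t]
    rw [Finset.sum_congr rfl (fun f _ => this f), Finset.sum_const, Finset.card_univ,
      smul_eq_mul]
  by_cases hne : Nonempty W
  · obtain ⟨w₀⟩ := hne
    have hΦinj : Function.Injective Φdef := by
      intro w1 w2 h
      obtain ⟨F1, e1⟩ := w1
      obtain ⟨F2, e2⟩ := w2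
      simp only [Φdef] at h
      have hF : F1 = F2 := by
        apply Subtype.ext
        funext i
        have h1 := congrArg (fun (E : Fin n ≃ Σ t : Fin k, Fin (s t)) => (E i).1) h
        simpa only [matchPhi_apply] using h1
      subst hF
      suffices he : e1 = e2 by rw [he]
      funext t
      apply Equiv.ext
      rintro ⟨i, rfl⟩
      have hh : matchPhi s F1.1 e1 i = matchPhi s F1.1 e2 i := by rw [h]
      rw [matchPhi_apply, matchPhi_apply] at hh
      obtain ⟨-, h2⟩ := Sigma.mk.inj_iff.mp hh
      exact eq_of_heq h2
    have cardEquiv : Fintype.card (Fin n ≃ Σ t : Fin k, Fin (s t)) = n.factorial := by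
      rw [Fintype.card_equiv (Φdef w₀), Fintype.card_fin]
    calc Fintype.card Sub * ∏ t, (s t).factorial = Fintype.card W := cardW.symm
      _ ≤ Fintype.card (Fin n ≃ Σ t : Fin k, Fin (s t)) := Fintype.card_le_of_injective _ hΦinj
      _ = n.factorial := cardEquiv
  · have : Fintype.card W = 0 := by
      rw [Fintype.card_eq_zero_iff]
      exact not_nonempty_iff.mp hne
    -- then Sub is empty or some s t = 0... cardW gives product = 0
    rw [this] at cardW
    rcases Nat.mul_eq_zero.mp cardW.symm with h | h
    · rw [h, Nat.zero_mul]; exact Nat.zero_le _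
    · rw [h, Nat.mul_zero]; exact Nat.zero_le _

lemma comp_card_le {n k : ℕ} (hk : 0 < k) (S : Finset (Fin k → ℕ))
    (hS : ∀ s ∈ S, (∀ t, 1 ≤ s t) ∧ ∑ t, s t = n) : S.card ≤ n ^ (k-1) := by
  obtain ⟨k', rfl⟩ : ∃ k', k = k' + 1 := ⟨k - 1, by omega⟩
  have hsle : ∀ s ∈ S, ∀ t, s t ≤ n := by
    intro s hs t
    obtain ⟨h1, h2⟩ := hS s hs
    calc s t ≤ ∑ t', s t' := Finset.single_le_sum (fun _ _ => Nat.zero_le _) (Finset.mem_univ t)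
      _ = n := h2
  have hn0 : ∀ s ∈ S, 0 < n := by
    intro s hs
    obtain ⟨h1, h2⟩ := hS s hs
    have := h1 ⟨0, hk⟩
    have := hsle s hs ⟨0, hk⟩
    omega
  have key : S.card ≤ Fintype.card (Fin k' → Fin n) := by
    by_cases hSne : S.Nonempty
    · obtain ⟨s₀, hs₀⟩ := hSne
      have hn : 0 < n := hn0 s₀ hs₀
      rw [← Finset.card_univ]
      apply Finset.card_le_card_of_injOn
        (fun s => fun i : Fin k' => (⟨min (s i.castSucc - 1) (n-1), by omega⟩ : Fin n))
      · intro s _; exact Finset.mem_univ _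
      · intro s hs s' hs' h
        simp only [Finset.mem_coe] at hs hs'
        funext t
        have hle := hsle s hs
        have hle' := hsle s' hs'
        have h1 := (hS s hs).1
        have h1' := (hS s' hs').1
        have hcast : ∀ i : Fin k', s i.castSucc = s' i.castSucc := by
          intro i
          have hv := congrArg Fin.val (congrFun h i)
          simp only at hv
          have b1 : s i.castSucc - 1 ≤ n - 1 := by have := hle i.castSucc; omega
          have b1' : s' i.castSucc - 1 ≤ n - 1 := by have := hle' i.castSucc; omega
          rw [min_eq_left b1, min_eq_left b1'] at hv
          have := h1 i.castSucc
          have := h1' i.castSucc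
          omega
        rcases Fin.eq_castSucc_or_eq_last t with ⟨i, rfl⟩ | rfl
        · exact hcast i
        · have hsum := (hS s hs).2
          have hsum' := (hS s' hs').2
          rw [Fin.sum_univ_castSucc] at hsum hsum'
          have heq : ∑ i : Fin k', s i.castSucc = ∑ i : Fin k', s' i.castSucc :=
            Finset.sum_congr rfl (fun i _ => hcast i)
          omega
    · rw [Finset.not_nonempty_iff_eq_empty] at hSne
      rw [hSne, Finset.card_empty]
      exact Nat.zero_le _
  calc S.card ≤ Fintype.card (Fin k' → Fin n) := key
    _ = n ^ k' := by rw [Fintype.card_fun, Fintype.card_fin, Fintype.card_fin]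
    _ = n ^ (k' + 1 - 1) := by norm_num










lemma splitMix_entry {m n : ℕ} (F : Type) [Field F] (π : Equiv.Perm (Fin (m*n)))
    (i : Fin n) (x : Fin (m*n)) :
    splitMixMatrix m n F π i x = if blk (π.symm x) = i then (1 : F) else 0 := by
  unfold splitMixMatrix
  rw [Matrix.of_apply]
  congr 1
  simp only [eq_iff_iff]
  constructor
  · intro h; exact Fin.ext h
  · intro h; exact congrArg Fin.val h

theorem exists_certificate {m n k : ℕ} (hm : 0 < m) (hn : 0 < n) (hk : 0 < k)
    (F : Type) [Field F] (π π' : Equiv.Perm (Fin (m*n)))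
    (hdef : k ≤ 2 * n - (Matrix.fromRows (splitMixMatrix m n F π) (splitMixMatrix m n F π')).rank) :
    ∃ f f' : Fin n → Fin k, Function.Surjective f ∧
      (∀ t, Fintype.card {i : Fin n // f i = t} = Fintype.card {i : Fin n // f' i = t}) ∧
      (∀ x, f (blk (π.symm x)) = f' (blk (π'.symm x))) := by
  classical
  set M := Matrix.fromRows (splitMixMatrix m n F π) (splitMixMatrix m n F π') with hM
  set L : Fin (m*n) → Fin n := fun x => blk (π.symm x) with hL
  set R : Fin (m*n) → Fin n := fun x => blk (π'.symm x) with hR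
  set Rel : Fin n → Fin n → Prop := fun i i' => ∃ x x', L x = i ∧ L x' = i' ∧ R x = R x'
    with hRel
  let st : Setoid (Fin n) := ⟨Relation.EqvGen Rel, Relation.EqvGen.is_equivalence Rel⟩
  let Q := Quotient st
  have hRclass : ∀ x x', R x = R x' → (⟦L x⟧ : Q) = ⟦L x'⟧ := by
    intro x x' h
    exact Quotient.sound (Relation.EqvGen.rel _ _ ⟨x, x', rfl, rfl, h⟩)
  have a0 : Fin m := ⟨0, hm⟩
  -- elements in given left and right blocks
  set xL : Fin n → Fin (m*n) := fun i => π (unblk a0 i) with hxL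
  set xR : Fin n → Fin (m*n) := fun j => π' (unblk a0 j) with hxR
  have hxLL : ∀ i, L (xL i) = i := by
    intro i; show blk (π.symm (π (unblk a0 i))) = i
    rw [Equiv.symm_apply_apply, blk_unblk]
  have hxRR : ∀ j, R (xR j) = j := by
    intro j; show blk (π'.symm (π' (unblk a0 j))) = j
    rw [Equiv.symm_apply_apply, blk_unblk]
  set rep : Q → Fin n := fun t => R (xL t.out) with hrep
  set c := Fintype.card Q with hc
  -- the linearly independent family
  set ι := (Fin n ⊕ {j : Fin n // j ∉ Set.range rep}) with hι
  set emb : ι → (Fin n ⊕ Fin n) := Sum.elim Sum.inl (fun j => Sum.inr j.1) with hemb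
  set v : ι → (Fin (m*n) → F) := fun z => M (emb z) with hv
  have rowL : ∀ (i : Fin n) (x : Fin (m*n)), M (Sum.inl i) x = if L x = i then (1:F) else 0 := by
    intro i x
    rw [hM, Matrix.fromRows_apply_inl, splitMix_entry]
  have rowR : ∀ (j : Fin n) (x : Fin (m*n)), M (Sum.inr j) x = if R x = j then (1:F) else 0 := by
    intro j x
    rw [hM, Matrix.fromRows_apply_inr, splitMix_entry]
  have hvindep : LinearIndependent F v := by
    rw [Fintype.linearIndependent_iff]
    intro g hg
    set a : Fin n → F := fun i => g (Sum.inl i) with ha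
    set b : Fin n → F := fun j => if h : j ∈ Set.range rep then 0 else g (Sum.inr ⟨j, h⟩) with hb
    have eval : ∀ x, a (L x) + b (R x) = 0 := by
      intro x
      have hgx := congrFun hg x
      rw [Finset.sum_apply] at hgx
      have hsplit : ∑ z : ι, (g z • v z) x
          = (∑ i : Fin n, g (Sum.inl i) * M (Sum.inl i) x)
            + ∑ j : {j : Fin n // j ∉ Set.range rep}, g (Sum.inr j) * M (Sum.inr j.1) x := by
        rw [Fintype.sum_sum_type]
        rfl
      rw [hsplit] at hgx
      have h1 : ∑ i : Fin n, g (Sum.inl i) * M (Sum.inl i) x = a (L x) := by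
        have : ∀ i, g (Sum.inl i) * M (Sum.inl i) x = if L x = i then a i else 0 := by
          intro i
          rw [rowL]
          by_cases h : L x = i <;> simp [h, ha]
        rw [Finset.sum_congr rfl (fun i _ => this i)]
        exact (Finset.sum_ite_eq Finset.univ (L x) a).trans (if_pos (Finset.mem_univ _))
      have h2 : ∑ j : {j : Fin n // j ∉ Set.range rep}, g (Sum.inr j) * M (Sum.inr j.1) x
          = b (R x) := by
        by_cases h : R x ∈ Set.range rep
        · rw [hb]
          simp only [h, dif_pos]
          apply Finset.sum_eq_zero
          intro j _
          rw [rowR]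
          have : R x ≠ j.1 := fun heq => j.2 (heq ▸ h)
          simp [this]
        · rw [hb]
          simp only [h, dif_neg, not_false_iff]
          rw [Finset.sum_eq_single (⟨R x, h⟩ : {j : Fin n // j ∉ Set.range rep})]
          · rw [rowR]; simp
          · intro j _ hj
            rw [rowR]
            have : R x ≠ j.1 := by
              intro heq
              exact hj (Subtype.ext heq.symm)
            simp [this]
          · intro habs
            exact absurd (Finset.mem_univ _) habs
      rw [h1, h2] at hgx
      exact hgx
    have const : ∀ i i', Relation.EqvGen Rel i i' → a i = a i' := by
      intro i i' h
      induction h with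
      | rel i i' hr =>
        obtain ⟨x, x', hx, hx', hRR⟩ := hr
        have e1 := eval x
        have e2 := eval x'
        rw [hx] at e1
        rw [hx'] at e2
        rw [hRR] at e1
        linear_combination e1 - e2
      | refl => rfl
      | symm _ _ _ ih => exact ih.symm
      | trans _ _ _ _ _ ih1 ih2 => exact ih1.trans ih2
    have azero : ∀ i, a i = 0 := by
      intro i
      set t : Q := ⟦i⟧ with ht
      have h1 : a i = a t.out := by
        apply const
        apply Quotient.exact (s := st)
        rw [Quotient.out_eq]
      have h2 : a t.out + b (rep t) = 0 := by
        have := eval (xL t.out)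
        rwa [hxLL] at this
      have h3 : b (rep t) = 0 := by
        rw [hb]
        exact dif_pos ⟨t, rfl⟩
      rw [h1]
      linear_combination h2 - h3
    have bzero : ∀ (j : Fin n) (h : j ∉ Set.range rep), g (Sum.inr ⟨j, h⟩) = 0 := by
      intro j h
      have e := eval (xR j)
      rw [hxRR] at e
      have hbj : b j = g (Sum.inr ⟨j, h⟩) := by rw [hb]; exact dif_neg h
      have := azero (L (xR j))
      rw [this] at e
      rw [← hbj]
      linear_combination e
    intro z
    match z with
    | Sum.inl i => exact azero i
    | Sum.inr ⟨j, h⟩ => exact bzero j h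
  -- rank bound
  have hcard_ι : 2 * n - c ≤ Fintype.card ι := by
    show 2 * n - c ≤ Fintype.card (Fin n ⊕ {j : Fin n // j ∉ Set.range rep})
    rw [Fintype.card_sum, Fintype.card_fin]
    have h1 : Fintype.card {j : Fin n // j ∉ Set.range rep}
        = n - Fintype.card {j : Fin n // j ∈ Set.range rep} := by
      have := Fintype.card_subtype_compl (fun j : Fin n => j ∈ Set.range rep)
      rwa [Fintype.card_fin] at this
    have h2 : Fintype.card {j : Fin n // j ∈ Set.range rep} ≤ c := by
      rw [hc]
      calc Fintype.card {j : Fin n // j ∈ Set.range rep}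
          = Fintype.card (Set.range rep) := rfl
        _ ≤ Fintype.card Q := Fintype.card_range_le rep
    omega
  have hrank_ge : 2 * n - c ≤ M.rank := by
    have hspan1 : Module.finrank F (Submodule.span F (Set.range v)) = Fintype.card ι :=
      finrank_span_eq_card hvindep
    have hsub : Submodule.span F (Set.range v) ≤ Submodule.span F (Set.range M) := by
      apply Submodule.span_mono
      rintro _ ⟨z, rfl⟩
      exact ⟨emb z, rfl⟩
    have hmono := Submodule.finrank_mono hsub
    rw [hspan1] at hmono
    rw [Matrix.rank_eq_finrank_span_row]
    change 2 * n - c ≤ Module.finrank F (Submodule.span F (Set.range M))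
    omega
  have hcn : c ≤ n := by
    rw [hc]
    have := Fintype.card_quotient_le st
    rwa [Fintype.card_fin] at this
  have hrank_le : M.rank ≤ 2 * n := by
    have := M.rank_le_card_height
    rwa [Fintype.card_sum, Fintype.card_fin, ← two_mul] at this
  have hkc : k ≤ c := by omega
  -- build the colorings
  let eQ := Fintype.equivFin Q
  let gk : Q → Fin k := fun q => ⟨min (eQ q : ℕ) (k-1), by omega⟩
  have hgk : Function.Surjective gk := by
    intro t
    have ht := t.isLt
    refine ⟨eQ.symm ⟨(t : ℕ), by omega⟩, ?_⟩
    apply Fin.ext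
    show min ((eQ (eQ.symm ⟨(t : ℕ), _⟩)) : ℕ) (k-1) = (t : ℕ)
    rw [Equiv.apply_symm_apply]
    show min (t : ℕ) (k-1) = (t : ℕ)
    omega
  set f : Fin n → Fin k := fun i => gk ⟦i⟧ with hf
  set f' : Fin n → Fin k := fun j => gk ⟦L (xR j)⟧ with hf'
  have compat : ∀ x, f (L x) = f' (R x) := by
    intro x
    show gk ⟦L x⟧ = gk ⟦L (xR (R x))⟧
    congr 1
    exact hRclass x (xR (R x)) (by rw [hxRR])
  refine ⟨f, f', ?_, ?_, compat⟩
  · intro t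
    obtain ⟨q, hq⟩ := hgk t
    refine ⟨q.out, ?_⟩
    show gk ⟦q.out⟧ = t
    rw [Quotient.out_eq]
    exact hq
  · intro t
    have hfib : Fintype.card {x : Fin (m*n) // f (L x) = t}
        = Fintype.card {x : Fin (m*n) // f' (R x) = t} :=
      Fintype.card_congr (Equiv.subtypeEquivRight (fun x => by rw [compat x]))
    have hL1 : Fintype.card {x : Fin (m*n) // f (L x) = t}
        = m * Fintype.card {i : Fin n // f i = t} := by
      rw [← card_blk_fiber hm f t]
      exact Fintype.card_congr (Equiv.subtypeEquiv π.symm (fun x => Iff.rfl))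
    have hR1 : Fintype.card {x : Fin (m*n) // f' (R x) = t}
        = m * Fintype.card {j : Fin n // f' j = t} := by
      rw [← card_blk_fiber hm f' t]
      exact Fintype.card_congr (Equiv.subtypeEquiv π'.symm (fun x => Iff.rfl))
    apply Nat.eq_of_mul_eq_mul_left hm
    rw [← hL1, ← hR1]
    exact hfib




lemma sum_fiber_card {n k : ℕ} (f : Fin n → Fin k) :
    ∑ t, Fintype.card {i : Fin n // f i = t} = n := by
  rw [← Fintype.card_sigma, Fintype.card_congr (Equiv.sigmaFiberEquiv f), Fintype.card_fin]

end SplitMix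

open SplitMix in
theorem stmt7 (m n k : ℕ) (hm : 3 ≤ m) (hn : 0 < n) (hk : 0 < k)
    (F : Type) [Field F] [Fintype F] :
    (Nat.card {p : Equiv.Perm (Fin (m * n)) × Equiv.Perm (Fin (m * n)) //
        k ≤ 2 * n -
          (Matrix.fromRows (splitMixMatrix m n F p.1) (splitMixMatrix m n F p.2)).rank} : ℝ)
      / ((Nat.factorial (m * n) : ℝ) ^ 2)
      ≤ ((n : ℝ) ^ 2 / ((n : ℝ) / 2) ^ (m - 2)) ^ (((k : ℝ) - 1) / 2) := by
  classical
  have hm0 : 0 < m := by omega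
  set N := (m * n).factorial with hN
  set E : Finset (Equiv.Perm (Fin (m*n)) × Equiv.Perm (Fin (m*n))) :=
    Finset.univ.filter (fun p => k ≤ 2 * n -
      (Matrix.fromRows (splitMixMatrix m n F p.1) (splitMixMatrix m n F p.2)).rank) with hE
  have hNatcard : Nat.card {p : Equiv.Perm (Fin (m * n)) × Equiv.Perm (Fin (m * n)) //
      k ≤ 2 * n -
        (Matrix.fromRows (splitMixMatrix m n F p.1) (splitMixMatrix m n F p.2)).rank}
      = E.card := by
    rw [Nat.card_eq_fintype_card, hE, Fintype.card_subtype]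
  set st : (Fin n → Fin k) → Fin k → ℕ := fun f t => Fintype.card {i : Fin n // f i = t}
    with hst
  set C : Finset ((Fin n → Fin k) × (Fin n → Fin k)) := Finset.univ.filter
    (fun q => Function.Surjective q.1 ∧ ∀ t, st q.1 t = st q.2 t) with hC
  set ev : (Fin n → Fin k) × (Fin n → Fin k) →
      Finset (Equiv.Perm (Fin (m*n)) × Equiv.Perm (Fin (m*n))) := fun q =>
    Finset.univ.filter (fun p : Equiv.Perm (Fin (m*n)) × Equiv.Perm (Fin (m*n)) =>
      ∀ x, q.1 (blk (p.1.symm x)) = q.2 (blk (p.2.symm x))) with hev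
  set cmap : (Fin n → Fin k) × (Fin n → Fin k) → (Fin k → ℕ) := fun q => fun t => st q.1 t
    with hcmap
  set img := C.image cmap with himg
  set W : (Fin k → ℕ) → ℕ := fun s => N * ∏ t, (m * s t).factorial with hW
  have hsub : E ⊆ C.biUnion ev := by
    intro p hp
    rw [hE, Finset.mem_filter] at hp
    obtain ⟨-, hp⟩ := hp
    obtain ⟨f, f', hfs, hfib, hcomp⟩ := exists_certificate hm0 hn hk F p.1 p.2 hp
    rw [Finset.mem_biUnion]
    refine ⟨(f, f'), ?_, ?_⟩
    · rw [hC, Finset.mem_filter]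
      exact ⟨Finset.mem_univ _, hfs, fun t => hfib t⟩
    · rw [hev, Finset.mem_filter]
      exact ⟨Finset.mem_univ _, hcomp⟩
  have hev_card : ∀ q ∈ C, (ev q).card ≤ W (cmap q) := by
    intro q _
    show (ev q).card ≤ N * ∏ t, (m * st q.1 t).factorial
    have h1 : (ev q).card = Fintype.card {p : Equiv.Perm (Fin (m*n)) × Equiv.Perm (Fin (m*n)) //
        ∀ x, q.1 (blk (p.1.symm x)) = q.2 (blk (p.2.symm x))} := (Fintype.card_subtype _).symm
    rw [h1, card_pair_event]
    exact Nat.mul_le_mul_left _ (card_sigma_le hm0 q.1 q.2)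
  have step1 : E.card ≤ ∑ q ∈ C, W (cmap q) :=
    le_trans (le_trans (Finset.card_le_card hsub) (Finset.card_biUnion_le))
      (Finset.sum_le_sum hev_card)
  have step2 : ∑ q ∈ C, W (cmap q)
      = ∑ s ∈ img, ∑ q ∈ C.filter (fun q => cmap q = s), W (cmap q) := by
    rw [himg]
    exact (Finset.sum_fiberwise_of_maps_to (fun q hq => Finset.mem_image_of_mem cmap hq) _).symm
  have step3 : ∀ s ∈ img, ∑ q ∈ C.filter (fun q => cmap q = s), W (cmap q)
      = (C.filter (fun q => cmap q = s)).card * W s := by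
    intro s hs
    rw [Finset.sum_congr rfl (fun q hq => by rw [(Finset.mem_filter.mp hq).2]),
      Finset.sum_const, smul_eq_mul]
  have step4 : ∀ s ∈ img, (C.filter (fun q => cmap q = s)).card ≤
      (Fintype.card {f : Fin n → Fin k // ∀ t, st f t = s t}) ^ 2 := by
    intro s hs
    have hsubf : C.filter (fun q => cmap q = s) ⊆
        (Finset.univ.filter (fun f : Fin n → Fin k => ∀ t, st f t = s t)) ×ˢ
          (Finset.univ.filter (fun f : Fin n → Fin k => ∀ t, st f t = s t)) := by
      intro q hq
      rw [Finset.mem_filter] at hq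
      obtain ⟨hqC, hqs⟩ := hq
      rw [hC, Finset.mem_filter] at hqC
      obtain ⟨-, -, hfib⟩ := hqC
      rw [Finset.mem_product, Finset.mem_filter, Finset.mem_filter]
      refine ⟨⟨Finset.mem_univ _, fun t => ?_⟩, ⟨Finset.mem_univ _, fun t => ?_⟩⟩
      · exact congrFun hqs t
      · rw [← hfib t]; exact congrFun hqs t
    refine le_trans (Finset.card_le_card hsubf) ?_
    rw [Finset.card_product, sq]
    exact Nat.mul_le_mul (le_of_eq (Fintype.card_subtype _).symm)
      (le_of_eq (Fintype.card_subtype _).symm)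
  have himg_prop : ∀ s ∈ img, (∀ t, 1 ≤ s t) ∧ ∑ t, s t = n := by
    intro s hs
    rw [himg, Finset.mem_image] at hs
    obtain ⟨q, hqC, rfl⟩ := hs
    rw [hC, Finset.mem_filter] at hqC
    obtain ⟨-, hsurj, -⟩ := hqC
    constructor
    · intro t
      obtain ⟨i, hi⟩ := hsurj t
      exact Fintype.card_pos_iff.mpr ⟨⟨i, hi⟩⟩
    · exact sum_fiber_card q.1
  have himg_card : img.card ≤ n ^ (k - 1) :=
    comp_card_le hk img (fun s hs => himg_prop s hs)
  -- pass to the reals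
  set e : ℝ := ((k : ℝ) - 1) / 2 with hee
  have hk1 : (1 : ℝ) ≤ (k : ℝ) := by exact_mod_cast hk
  have he0 : 0 ≤ e := by rw [hee]; linarith
  set B : ℝ := (n : ℝ) ^ e with hB
  have hnpos : (0 : ℝ) < (n : ℝ) := by exact_mod_cast hn
  have hBpos : 0 < B := Real.rpow_pos_of_pos hnpos e
  have hB1 : B ^ 2 = ((n : ℝ)) ^ (((k - 1 : ℕ) : ℝ)) := by
    rw [hB, ← Real.rpow_natCast ((n:ℝ) ^ e) 2, ← Real.rpow_mul (le_of_lt hnpos)]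
    congr 1
    rw [hee]
    push_cast [Nat.cast_sub hk]
    ring
  have key : ∀ s ∈ img, ((Fintype.card {f : Fin n → Fin k // ∀ t, st f t = s t} : ℝ)) ^ 2
      * (W s : ℝ) ≤ (N : ℝ) ^ 2 * (B⁻¹) ^ (m - 2) := by
    intro s hs
    obtain ⟨hs1, hs2⟩ := himg_prop s hs
    set Pr : ℝ := ∏ t, ((s t).factorial : ℝ) with hPr
    have hPrpos : 0 < Pr :=
      Finset.prod_pos (fun t _ => by exact_mod_cast Nat.factorial_pos (s t))
    have hnfpos : (0:ℝ) < (n.factorial : ℝ) := by exact_mod_cast n.factorial_pos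
    set mult : ℝ := (n.factorial : ℝ) / Pr with hmult
    have hmultpos : 0 < mult := div_pos hnfpos hPrpos
    have h1 : (Fintype.card {f : Fin n → Fin k // ∀ t, st f t = s t} : ℝ) ≤ mult := by
      have hmc := match_count (n := n) s
      rw [hmult, le_div_iff₀ hPrpos]
      calc (Fintype.card {f : Fin n → Fin k // ∀ t, st f t = s t} : ℝ) * Pr
          = ((Fintype.card {f : Fin n → Fin k // ∀ t, st f t = s t}
              * ∏ t, (s t).factorial : ℕ) : ℝ) := by rw [hPr]; push_cast; ring
        _ ≤ (n.factorial : ℝ) := by exact_mod_cast hmc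
    have h2 : (∏ t, ((m * s t).factorial : ℝ)) ≤ (N : ℝ) * Pr ^ m / ((n.factorial : ℝ)) ^ m := by
      have hv := vandermonde m s Finset.univ
      rw [hs2] at hv
      rw [le_div_iff₀ (by positivity), mul_comm]
      calc ((n.factorial : ℝ)) ^ m * ∏ t, ((m * s t).factorial : ℝ)
          = (((n.factorial) ^ m * ∏ t, (m * s t).factorial : ℕ) : ℝ) := by push_cast; ring
        _ ≤ (((m * n).factorial * ∏ t, ((s t).factorial) ^ m : ℕ) : ℝ) := by exact_mod_cast hv
        _ = (N : ℝ) * Pr ^ m := by rw [hN, hPr]; push_cast [Finset.prod_pow]; ring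
    have h3 : B ≤ mult := by
      obtain ⟨Q, hQ1, hQ2, hQ3⟩ := mult_exists k n hk s hs1 hs2
      have hQle : (Q : ℝ) ≤ mult := by
        rw [hmult, le_div_iff₀ hPrpos]
        calc (Q : ℝ) * Pr = (((∏ t, (s t).factorial) * Q : ℕ) : ℝ) := by
              rw [hPr]; push_cast; ring
          _ ≤ (n.factorial : ℝ) := by exact_mod_cast hQ2
      have hsq : B ^ 2 ≤ mult ^ 2 := by
        rw [hB1]
        calc ((n:ℝ)) ^ (((k - 1 : ℕ)) : ℝ) = ((n ^ (k-1) : ℕ) : ℝ) := by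
              rw [Real.rpow_natCast]; push_cast; ring
          _ ≤ ((Q ^ 2 : ℕ) : ℝ) := by exact_mod_cast hQ3
          _ = (Q : ℝ) ^ 2 := by push_cast; ring
          _ ≤ mult ^ 2 := pow_le_pow_left₀ (by positivity) hQle 2
      nlinarith [hsq, hBpos, hmultpos]
    have hcard0 : (0:ℝ) ≤ (Fintype.card {f : Fin n → Fin k // ∀ t, st f t = s t} : ℝ) := by
      positivity
    have hWcast : (W s : ℝ) = (N : ℝ) * ∏ t, ((m * s t).factorial : ℝ) := by
      rw [hW]; push_cast; ring
    have halg : mult ^ 2 * ((N:ℝ) * ((N : ℝ) * Pr ^ m / ((n.factorial : ℝ)) ^ m))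
        = (N:ℝ)^2 * (mult⁻¹) ^ (m - 2) := by
      have hinv : mult⁻¹ = Pr / (n.factorial : ℝ) := by rw [hmult, inv_div]
      obtain ⟨d, hd⟩ : ∃ d, m = d + 2 := ⟨m - 2, by omega⟩
      have hd2 : m - 2 = d := by omega
      rw [hinv, hmult, hd2, hd, pow_add, pow_add, div_pow, div_pow]
      have hnf : (n.factorial:ℝ) ≠ 0 := ne_of_gt hnfpos
      have hPrne : Pr ≠ 0 := ne_of_gt hPrpos
      field_simp
    calc ((Fintype.card {f : Fin n → Fin k // ∀ t, st f t = s t} : ℝ)) ^ 2 * (W s : ℝ)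
        ≤ mult ^ 2 * ((N:ℝ) * ((N : ℝ) * Pr ^ m / ((n.factorial : ℝ)) ^ m)) := by
          apply mul_le_mul
          · exact pow_le_pow_left₀ hcard0 h1 2
          · rw [hWcast]
            exact mul_le_mul_of_nonneg_left h2 (by positivity)
          · rw [hWcast]; positivity
          · positivity
      _ = (N:ℝ)^2 * (mult⁻¹) ^ (m - 2) := halg
      _ ≤ (N:ℝ)^2 * (B⁻¹) ^ (m - 2) := by
          apply mul_le_mul_of_nonneg_left _ (by positivity)
          exact pow_le_pow_left₀ (by positivity) (inv_anti₀ hBpos h3) _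
  have stepN : E.card ≤ ∑ s ∈ img, (C.filter (fun q => cmap q = s)).card * W s := by
    calc E.card ≤ ∑ q ∈ C, W (cmap q) := step1
      _ = ∑ s ∈ img, ∑ q ∈ C.filter (fun q => cmap q = s), W (cmap q) := step2
      _ = ∑ s ∈ img, (C.filter (fun q => cmap q = s)).card * W s :=
          Finset.sum_congr rfl step3
  have stepR : (E.card : ℝ) ≤ (n:ℝ) ^ (k-1) * ((N : ℝ)^2 * (B⁻¹) ^ (m - 2)) := by
    calc (E.card : ℝ)
        ≤ ((∑ s ∈ img, (C.filter (fun q => cmap q = s)).card * W s : ℕ) : ℝ) := by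
          exact_mod_cast stepN
      _ = ∑ s ∈ img, ((C.filter (fun q => cmap q = s)).card : ℝ) * (W s : ℝ) := by
          push_cast; rfl
      _ ≤ ∑ _s ∈ img, (N : ℝ)^2 * (B⁻¹) ^ (m - 2) := by
          apply Finset.sum_le_sum
          intro s hs
          calc ((C.filter (fun q => cmap q = s)).card : ℝ) * (W s : ℝ)
              ≤ ((Fintype.card {f : Fin n → Fin k // ∀ t, st f t = s t} : ℝ))^2 * (W s : ℝ) := by
                apply mul_le_mul_of_nonneg_right _ (by positivity)
                exact_mod_cast step4 s hs
            _ ≤ (N : ℝ)^2 * (B⁻¹) ^ (m - 2) := key s hs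
      _ = (img.card : ℝ) * ((N : ℝ)^2 * (B⁻¹) ^ (m - 2)) := by
          rw [Finset.sum_const, nsmul_eq_mul]
      _ ≤ (n:ℝ)^(k-1) * ((N : ℝ)^2 * (B⁻¹) ^ (m - 2)) := by
          apply mul_le_mul_of_nonneg_right _ (by positivity)
          exact_mod_cast himg_card
  have hhalf : (0:ℝ) ≤ (n:ℝ)/2 := by positivity
  have hRW : ((n : ℝ) ^ 2 / ((n : ℝ) / 2) ^ (m - 2)) ^ e
      = (n:ℝ)^(k-1) / (((n:ℝ)/2) ^ e) ^ (m-2) := by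
    rw [Real.div_rpow (by positivity) (by positivity)]
    congr 1
    · rw [← Real.rpow_natCast (n:ℝ) 2, ← Real.rpow_mul (le_of_lt hnpos),
        ← Real.rpow_natCast (n:ℝ) (k-1)]
      congr 1
      rw [hee]
      push_cast [Nat.cast_sub hk]
      ring
    · rw [← Real.rpow_natCast ((n:ℝ)/2) (m-2), ← Real.rpow_mul hhalf,
        ← Real.rpow_natCast (((n:ℝ)/2) ^ e) (m-2), ← Real.rpow_mul hhalf]
      congr 1
      ring
  have hRHS : (n:ℝ)^(k-1) * (B⁻¹)^(m-2) ≤ ((n : ℝ) ^ 2 / ((n : ℝ) / 2) ^ (m - 2)) ^ e := by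
    rw [hRW, div_eq_mul_inv, ← inv_pow]
    apply mul_le_mul_of_nonneg_left _ (by positivity)
    apply pow_le_pow_left₀ (by positivity)
    apply inv_anti₀ (Real.rpow_pos_of_pos (by positivity) e)
    rw [hB]
    exact Real.rpow_le_rpow hhalf (by linarith) he0
  rw [hNatcard]
  rw [div_le_iff₀ (by positivity : (0:ℝ) < ((N:ℕ):ℝ)^2)]
  calc (E.card:ℝ) ≤ (n:ℝ)^(k-1) * ((N : ℝ)^2 * (B⁻¹) ^ (m - 2)) := stepR
    _ = ((n:ℝ)^(k-1) * (B⁻¹) ^ (m - 2)) * (N:ℝ)^2 := by ring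
    _ ≤ (((n : ℝ) ^ 2 / ((n : ℝ) / 2) ^ (m - 2)) ^ e) * (N:ℝ)^2 :=
        mul_le_mul_of_nonneg_right hRHS (by positivity)
end

section
/- Let π, π' be permutations of [mn], x ∈ F_q^n with Σ_i x_i = a, and let Y_{t,π} be the indicator that t_{π(m(i-1)+1)} + ... + t_{π(mi)} = x_i for all i ∈ [n]. For t uniform on {t ∈ F_q^{mn} : Σ_j t_j = a}, the expectation E[Y_{t,π} · Y_{t,π'}] is at most q^{d}/q^{2n-1}, where d = 2n - rank(A_{π,π'}). -/
section aux
open Finset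

variable {F : Type} [Field F] [Fintype F] [DecidableEq F]

omit [Fintype F] [DecidableEq F] in
lemma card_sol_le {M N : Type} [AddCommGroup M] [Module F M] [AddCommGroup N] [Module F N]
    (f : M →ₗ[F] N) (b : N) :
    Nat.card {t : M // f t = b} ≤ Nat.card (LinearMap.ker f) := by
  by_cases h : Nonempty {t : M // f t = b}
  · obtain ⟨t0, ht0⟩ := h
    refine le_of_eq (Nat.card_congr ⟨fun t => ⟨t.1 - t0, ?_⟩, fun k => ⟨k.1 + t0, ?_⟩, ?_, ?_⟩)
    · simp [LinearMap.mem_ker, map_sub, t.2, ht0]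
    · simp [map_add, k.2, ht0]
    · intro t; ext; simp
    · intro k; ext; simp
  · rw [@Nat.card_of_isEmpty _ (not_nonempty_iff.mp h)]
    exact Nat.zero_le _

omit [Fintype F] [DecidableEq F] in
lemma card_sol_eq {M N : Type} [AddCommGroup M] [Module F M] [AddCommGroup N] [Module F N]
    (f : M →ₗ[F] N) (b : N) (t0 : M) (ht0 : f t0 = b) :
    Nat.card {t : M // f t = b} = Nat.card (LinearMap.ker f) := by
  refine Nat.card_congr ⟨fun t => ⟨t.1 - t0, ?_⟩, fun k => ⟨k.1 + t0, ?_⟩, ?_, ?_⟩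
  · simp [LinearMap.mem_ker, map_sub, t.2, ht0]
  · simp [map_add, k.2, ht0]
  · intro t; ext; simp
  · intro k; ext; simp

omit [DecidableEq F] in
lemma card_ker_eq {α β : Type} [Fintype α] [Fintype β] (f : ((α → F) →ₗ[F] (β → F))) :
    Nat.card (LinearMap.ker f) = Fintype.card F ^ Module.finrank F (LinearMap.ker f) := by
  have : Fintype (LinearMap.ker f) := Fintype.ofFinite _
  rw [Nat.card_eq_fintype_card]
  exact Module.card_eq_pow_finrank

omit [DecidableEq F] in
lemma finrank_ker_mulVecLin {α β : Type} [Fintype α] [Fintype β] [DecidableEq α]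
    (A : Matrix β α F) :
    Module.finrank F (LinearMap.ker A.mulVecLin) = Fintype.card α - A.rank := by
  have h := LinearMap.finrank_range_add_finrank_ker A.mulVecLin
  rw [Module.finrank_pi] at h
  rw [Matrix.rank]
  omega

/-- reindexing the block sum along π -/
lemma block_sum_eq (m n : ℕ) (π : Equiv.Perm (Fin (m * n))) (t : Fin (m * n) → F) (i : Fin n) :
    (splitMixMatrix m n F π).mulVec t i
      = ∑ j ∈ Finset.univ.filter (fun j : Fin (m * n) => (j : ℕ) / m = (i : ℕ)), t (π j) := by
  have : (splitMixMatrix m n F π).mulVec t i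
      = ∑ j, (if ((π.symm j : Fin (m * n)) : ℕ) / m = (i : ℕ) then t j else 0) := by
    simp [Matrix.mulVec, dotProduct, splitMixMatrix, ite_mul]
  rw [this, ← Equiv.sum_comp π (fun j => if ((π.symm j : Fin (m * n)) : ℕ) / m = (i : ℕ) then t j else 0)]
  simp only [Equiv.symm_apply_apply, Finset.sum_filter]

omit [Fintype F] [DecidableEq F] in
lemma total_sum_eq (m n : ℕ) (hm : 0 < m) (π : Equiv.Perm (Fin (m * n))) (t : Fin (m * n) → F) :
    ∑ i : Fin n, (∑ j ∈ Finset.univ.filter (fun j : Fin (m * n) => (j : ℕ) / m = (i : ℕ)), t (π j))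
      = ∑ j, t j := by
  have key : ∑ i : Fin n, (∑ j ∈ Finset.univ.filter
        (fun j : Fin (m * n) => (j : ℕ) / m = (i : ℕ)), t (π j))
      = ∑ i ∈ Finset.range n, (∑ j ∈ Finset.univ.filter
        (fun j : Fin (m * n) => (j : ℕ) / m = i), t (π j)) := by
    rw [Finset.sum_range fun i => _]
  rw [key, Finset.sum_fiberwise_eq_sum_filter]
  have : Finset.univ.filter (fun j : Fin (m * n) => (j : ℕ) / m ∈ Finset.range n)
      = Finset.univ := by
    ext j
    simp [Finset.mem_range, Nat.div_lt_iff_lt_mul hm, Nat.mul_comm n m, j.2]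
  rw [this, ← Equiv.sum_comp π t]

end aux


/-- `E[Y_{t,π} Y_{t,π'}] ≤ q^d / q^{2n-1}` for `t` uniform on `{∑ t_j = a}`, expressed by
clearing denominators: the count of `t` with `∑ t_j = a` satisfying both systems of block
equations, times `q^{2n-1}`, is at most `q^d` times the count of `t` with `∑ t_j = a`. -/
theorem stmt11 (m n : ℕ) (hm : 0 < m) (hn : 0 < n)
    (F : Type) [Field F] [Fintype F] [DecidableEq F]
    (a : F) (π π' : Equiv.Perm (Fin (m * n))) (x : Fin n → F) (hx : ∑ i, x i = a) :
    Nat.card {t : Fin (m * n) → F // (∑ j, t j = a) ∧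
        (∀ i : Fin n,
          (∑ j ∈ Finset.univ.filter (fun j : Fin (m * n) => (j : ℕ) / m = (i : ℕ)),
            t (π j)) = x i) ∧
        (∀ i : Fin n,
          (∑ j ∈ Finset.univ.filter (fun j : Fin (m * n) => (j : ℕ) / m = (i : ℕ)),
            t (π' j)) = x i)}
      * (Fintype.card F) ^ (2 * n - 1)
    ≤ (Fintype.card F) ^
        (2 * n -
          (Matrix.fromRows (splitMixMatrix m n F π) (splitMixMatrix m n F π')).rank)
      * Nat.card {t : Fin (m * n) → F // ∑ j, t j = a} := by
  classical
  set q := Fintype.card F with hq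
  have hq1 : 1 ≤ q := Fintype.card_pos
  set A := Matrix.fromRows (splitMixMatrix m n F π) (splitMixMatrix m n F π') with hA
  set r := A.rank with hr
  have hmn : 0 < m * n := Nat.mul_pos hm hn
  -- the all-ones row matrix for the sum condition
  set B : Matrix (Fin 1) (Fin (m * n)) F := Matrix.of fun _ _ => (1 : F) with hB
  -- rank bounds
  have hr2n : r ≤ 2 * n := by
    have := A.rank_le_card_height
    simpa [Fintype.card_sum, two_mul] using this
  have hrmn : r ≤ m * n := by simpa using A.rank_le_card_width
  -- Step 1: rewrite LHS count as solutions of A t = Sum.elim x x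
  have hcount1 : Nat.card {t : Fin (m * n) → F // (∑ j, t j = a) ∧
        (∀ i : Fin n,
          (∑ j ∈ Finset.univ.filter (fun j : Fin (m * n) => (j : ℕ) / m = (i : ℕ)),
            t (π j)) = x i) ∧
        (∀ i : Fin n,
          (∑ j ∈ Finset.univ.filter (fun j : Fin (m * n) => (j : ℕ) / m = (i : ℕ)),
            t (π' j)) = x i)}
      = Nat.card {t : Fin (m * n) → F // A.mulVecLin t = Sum.elim x x} := by
    apply Nat.card_congr
    apply Equiv.subtypeEquivRight
    intro t
    constructor
    · rintro ⟨-, h1, h2⟩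
      funext s
      cases s with
      | inl i => simp [hA, Matrix.mulVecLin_apply, Matrix.fromRows_mulVec, block_sum_eq, h1 i]
      | inr i => simp [hA, Matrix.mulVecLin_apply, Matrix.fromRows_mulVec, block_sum_eq, h2 i]
    · intro h
      have h1 : ∀ i : Fin n, (∑ j ∈ Finset.univ.filter
          (fun j : Fin (m * n) => (j : ℕ) / m = (i : ℕ)), t (π j)) = x i := by
        intro i
        have := congrFun h (Sum.inl i)
        simpa [hA, Matrix.mulVecLin_apply, Matrix.fromRows_mulVec, block_sum_eq] using this
      have h2 : ∀ i : Fin n, (∑ j ∈ Finset.univ.filter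
          (fun j : Fin (m * n) => (j : ℕ) / m = (i : ℕ)), t (π' j)) = x i := by
        intro i
        have := congrFun h (Sum.inr i)
        simpa [hA, Matrix.mulVecLin_apply, Matrix.fromRows_mulVec, block_sum_eq] using this
      refine ⟨?_, h1, h2⟩
      rw [← total_sum_eq m n hm π t, ← hx]
      exact Finset.sum_congr rfl fun i _ => h1 i
  -- Step 1': bound it
  have hb1 : Nat.card {t : Fin (m * n) → F // A.mulVecLin t = Sum.elim x x} ≤ q ^ (m * n - r) := by
    refine le_trans (card_sol_le _ _) ?_
    rw [card_ker_eq, finrank_ker_mulVecLin]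
    simp [hr, hq]
  -- Step 2: the sum-condition count equals q ^ (m*n - 1)
  have hBcond : ∀ t : Fin (m * n) → F, (B.mulVecLin t = fun _ => a) ↔ (∑ j, t j = a) := by
    intro t
    constructor
    · intro h
      have := congrFun h 0
      simpa [hB, Matrix.mulVecLin_apply, Matrix.mulVec, dotProduct] using this
    · intro h
      funext i
      simpa [hB, Matrix.mulVecLin_apply, Matrix.mulVec, dotProduct] using h
  have hBsurj : Function.Surjective B.mulVecLin := by
    intro c
    refine ⟨fun j => if j = ⟨0, hmn⟩ then c 0 else 0, ?_⟩
    funext i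
    have : i = 0 := Subsingleton.elim i 0
    subst this
    simp [hB, Matrix.mulVecLin_apply, Matrix.mulVec, dotProduct]
  have hBrank : B.rank = 1 := by
    rw [Matrix.rank, LinearMap.range_eq_top.mpr hBsurj, finrank_top, Module.finrank_pi]
    simp
  have hcount2 : Nat.card {t : Fin (m * n) → F // ∑ j, t j = a} = q ^ (m * n - 1) := by
    have e : Nat.card {t : Fin (m * n) → F // ∑ j, t j = a}
        = Nat.card {t : Fin (m * n) → F // B.mulVecLin t = fun _ => a} := by
      apply Nat.card_congr
      exact Equiv.subtypeEquivRight fun t => (hBcond t).symm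
    rw [e]
    obtain ⟨t0, ht0⟩ := hBsurj (fun _ => a)
    rw [card_sol_eq _ _ t0 ht0, card_ker_eq, finrank_ker_mulVecLin, hBrank]
    simp [hq]
  clear_value q A r B
  rw [hcount1, hcount2]
  refine le_trans (Nat.mul_le_mul_right _ hb1) ?_
  rw [← pow_add, ← pow_add]
  refine Nat.pow_le_pow_right hq1 ?_
  clear hcount1 hcount2 hb1 hBcond hBsurj hx hA hB
  omega
end

section
/- Consider an n-party aggregation protocol over F_q in the anonymized model with encoder Enc: F_q → [ℓ]^m, which is correct (the analyzer always outputs the sum of the inputs). Then for any distinct x, x' ∈ F_q, the distributions Enc(x) and Enc(x') on [ℓ]^m have disjoint supports. -/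
/-!
If `Enc x r = Enc x' r'`, let one party hold `x` (resp. `x'`) with randomness `r` (resp. `r'`)
while all other parties hold `0` with the same randomness. The analyzer then sees the same
multiset of messages in both runs, so by correctness the two sums `x` and `x'` coincide.
-/

open Function

section Anonymized

variable {ι F R M L : Type*} [Fintype ι] [Fintype M]

def transcript (Enc : F → R → M → L) (x : ι → F) (r : ι → R) : Multiset L :=
  ∑ i, Finset.univ.val.map (Enc (x i) (r i))

theorem transcript_congr {Enc : F → R → M → L} {x x' : ι → F} {r r' : ι → R}
    (h : ∀ i, Enc (x i) (r i) = Enc (x' i) (r' i)) :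
    transcript Enc x r = transcript Enc x' r' := by
  simp only [transcript, h]

theorem eq_of_enc_eq_of_correct [DecidableEq ι] [AddCommMonoid F]
    {Enc : F → R → M → L} {A : Multiset L → F}
    (hcorrect : ∀ x r, A (transcript Enc x r) = ∑ i : ι, x i) (i : ι)
    {a b : F} {s t : R} (hab : Enc a s = Enc b t) : a = b := by
  have hsame : transcript Enc (Pi.single i a) (fun _ => s) =
      transcript Enc (Pi.single i b) (update (fun _ => s) i t) := by
    refine transcript_congr fun j => ?_
    rcases eq_or_ne j i with rfl | hj
    · simpa using hab
    · simp [hj]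
  simpa using (hcorrect _ _).symm.trans ((congrArg A hsame).trans (hcorrect _ _))

end Anonymized

theorem stmt13_general (F : Type) [Field F]
    (ℓ m n : ℕ) (hn : 2 ≤ n)
    (R : Type)
    (Enc : F → R → Fin m → Fin ℓ) (A : Multiset (Fin ℓ) → F)
    (hcorrect : ∀ (x : Fin n → F) (r : Fin n → R),
      A (∑ i : Fin n, Multiset.map (Enc (x i) (r i)) Finset.univ.val) = ∑ i, x i)
    (x x' : F) (hxx : x ≠ x') (r r' : R) :
    Enc x r ≠ Enc x' r' :=
  fun h => hxx (eq_of_enc_eq_of_correct hcorrect ⟨0, by omega⟩ h)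

/-- A correct one-round aggregation protocol in the anonymized model: each party `i` with
input `x i` and private randomness `r i` sends the `m` messages `Enc (x i) (r i)`; the
analyzer sees the (shuffled) multiset of all `n*m` messages and always outputs the sum.
Then the supports of the encodings of distinct inputs are disjoint. -/
theorem stmt13 (F : Type) [Field F] [Fintype F] [DecidableEq F]
    (ℓ m n : ℕ) (hℓ : 0 < ℓ) (hm : 0 < m) (hn : 2 ≤ n)
    (R : Type) [Fintype R] [Nonempty R]
    (Enc : F → R → Fin m → Fin ℓ) (A : Multiset (Fin ℓ) → F)
    (hcorrect : ∀ (x : Fin n → F) (r : Fin n → R),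
      A (∑ i : Fin n, Multiset.map (Enc (x i) (r i)) Finset.univ.val) = ∑ i, x i)
    (x x' : F) (hxx : x ≠ x') (r r' : R) :
    Enc x r ≠ Enc x' r' :=
  stmt13_general F ℓ m n hn R Enc A hcorrect x x' hxx r r'
end

section
/- Let t ≤ m and j < t be positive integers and n ≥ 1. If π is a uniformly random permutation of [nm], the probability that max_i |π({1,...,t}) ∩ {m(i-1)+1,...,mi}| = j is at most n · (t choose j) · (m choose j)/(nm choose j), which is at most (n·(m choose t)/(nm choose t)) · (nm)^{3(t-j)}. -/
open Finset

lemma orderIso_congr {N k : ℕ} (U U' : Finset (Fin N)) (hUU : U = U')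
    (h : U.card = k) (h' : U'.card = k) (a b : Fin k) (hab : a = b) :
    ((U.orderIsoOfFin h a : U) : Fin N) = ((U'.orderIsoOfFin h' b : U') : Fin N) := by
  subst hUU; subst hab; rfl

lemma count_bound {N m j : ℕ} (B : Finset (Fin N)) (hB : B.card ≤ m)
    (T : Finset (Fin N)) (hT : T.card = j) :
    (univ.filter fun π : Equiv.Perm (Fin N) => ∀ p ∈ T, π p ∈ B).card
      ≤ m.descFactorial j * (N - j).factorial := by
  classical
  have hTc : (Tᶜ : Finset (Fin N)).card = N - j := by
    rw [Finset.card_compl, hT, Fintype.card_fin]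
  set c := Tᶜ.orderIsoOfFin hTc with hc
  have himgc : ∀ π : Equiv.Perm (Fin N), ((T.image π)ᶜ).card = N - j := fun π => by
    rw [Finset.card_compl, Finset.card_image_of_injective _ π.injective, hT, Fintype.card_fin]
  have hmem : ∀ (π : Equiv.Perm (Fin N)) (k : Fin (N - j)), π (c k) ∈ (T.image π)ᶜ := by
    intro π k
    rw [Finset.mem_compl]
    intro hmem
    obtain ⟨x, hx, hxe⟩ := Finset.mem_image.mp hmem
    have hxc : x = (c k : Fin N) := π.injective hxe
    have hk := (c k).2
    rw [Finset.mem_compl] at hk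
    exact hk (hxc ▸ hx)
  let Φ : {π : Equiv.Perm (Fin N) // ∀ p ∈ T, π p ∈ B} →
      ((T : Finset (Fin N)) ↪ (B : Finset (Fin N))) × (Fin (N - j) ↪ Fin (N - j)) := fun π =>
    (⟨fun x => ⟨π.1 x.1, π.2 x.1 x.2⟩,
        fun a b hab => Subtype.ext (π.1.injective (congrArg Subtype.val hab))⟩,
     ⟨fun k => ((T.image π.1)ᶜ.orderIsoOfFin (himgc π.1)).symm ⟨π.1 (c k), hmem π.1 k⟩,
        by
          intro k l hkl
          have := congrArg ((T.image π.1)ᶜ.orderIsoOfFin (himgc π.1)) hkl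
          simp only [OrderIso.apply_symm_apply] at this
          have : π.1 (c k) = π.1 (c l) := congrArg Subtype.val this
          exact c.injective (Subtype.ext (π.1.injective this))⟩)
  have hΦ : Function.Injective Φ := by
    rintro ⟨π, hπ⟩ ⟨π', hπ'⟩ h
    rw [Prod.ext_iff] at h
    obtain ⟨h1, h2⟩ := h
    have hTeq : ∀ x ∈ T, π x = π' x := by
      intro x hx
      have := DFunLike.congr_fun h1 ⟨x, hx⟩
      exact congrArg Subtype.val this
    have hU : T.image π = T.image π' := Finset.image_congr fun x hx => hTeq x hx
    have hcomp : ∀ x, x ∈ Tᶜ → π x = π' x := by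
      intro x hx
      obtain ⟨k, hk⟩ : ∃ k, c k = ⟨x, hx⟩ := ⟨c.symm ⟨x, hx⟩, c.apply_symm_apply _⟩
      have h2k := DFunLike.congr_fun h2 k
      simp only [Φ, Function.Embedding.coeFn_mk] at h2k
      have key := orderIso_congr ((T.image π)ᶜ) ((T.image π')ᶜ) (by rw [hU])
        (himgc π) (himgc π') _ _ h2k
      erw [OrderIso.apply_symm_apply, OrderIso.apply_symm_apply] at key; simp only at key
      rw [hk] at key
      exact key
    apply Subtype.ext
    apply Equiv.ext
    intro x
    by_cases hx : x ∈ T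
    · exact hTeq x hx
    · exact hcomp x (Finset.mem_compl.mpr hx)
  calc (univ.filter fun π : Equiv.Perm (Fin N) => ∀ p ∈ T, π p ∈ B).card
      = Fintype.card {π : Equiv.Perm (Fin N) // ∀ p ∈ T, π p ∈ B} :=
        (Fintype.card_subtype _).symm
    _ ≤ Fintype.card ((((T : Finset (Fin N)) : Type) ↪ B) × (Fin (N - j) ↪ Fin (N - j))) :=
        Fintype.card_le_of_injective Φ hΦ
    _ = (Fintype.card B).descFactorial (Fintype.card T) * ((N - j).descFactorial (N - j)) := by
        rw [Fintype.card_prod, Fintype.card_embedding_eq, Fintype.card_embedding_eq,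
          Fintype.card_fin]
    _ ≤ m.descFactorial j * (N - j).factorial := by
        rw [Fintype.card_coe, Fintype.card_coe, hT, Nat.descFactorial_self]
        exact Nat.mul_le_mul_right _ (Nat.descFactorial_le _ hB)

/-- For a uniformly random permutation `π` of `[nm]`, the probability that the largest
number of the first `t` positions landing in a single party's block equals `j` is at most
`n · C(t,j) · C(m,j) / C(nm,j)`, which is at most `(n · C(m,t)/C(nm,t)) · (nm)^{3(t-j)}`. -/
theorem stmt19 (m n t j : ℕ) (hn : 1 ≤ n) (ht : t ≤ m) (hj : 0 < j) (hjt : j < t) :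
    (Nat.card {π : Equiv.Perm (Fin (m * n)) //
        (Finset.univ.sup (fun i : Fin n =>
          (Finset.univ.filter (fun p : Fin (m * n) =>
            (p : ℕ) < t ∧ (π p : ℕ) / m = (i : ℕ))).card)) = j} : ℝ)
        / (Nat.factorial (m * n) : ℝ)
      ≤ (n : ℝ) * (t.choose j : ℝ) * (m.choose j : ℝ) / ((m * n).choose j : ℝ) ∧
    (n : ℝ) * (t.choose j : ℝ) * (m.choose j : ℝ) / ((m * n).choose j : ℝ)
      ≤ ((n : ℝ) * (m.choose t : ℝ) / ((m * n).choose t : ℝ)) *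
          ((m * n : ℕ) : ℝ) ^ (3 * (t - j)) := by
  have htN : t ≤ m * n := le_trans ht (Nat.le_mul_of_pos_right m hn)
  have hjt' : j ≤ t := le_of_lt hjt
  have hjN : j ≤ m * n := le_trans hjt' htN
  have hm : 0 < m := lt_of_lt_of_le (lt_of_lt_of_le hj hjt') ht
  constructor
  · -- first inequality
    set P : Equiv.Perm (Fin (m * n)) → Prop := fun π =>
      (Finset.univ.sup (fun i : Fin n =>
        (Finset.univ.filter (fun p : Fin (m * n) =>
          (p : ℕ) < t ∧ (π p : ℕ) / m = (i : ℕ))).card)) = j with hP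
    have hcard : (Nat.card {π : Equiv.Perm (Fin (m * n)) // P π}) = (univ.filter P).card := by
      rw [Nat.card_eq_fintype_card, Fintype.card_subtype]
    set s : Finset (Fin (m * n)) := univ.filter (fun p => (p : ℕ) < t) with hsdef
    have hs : s.card = t := by
      have : s = Finset.attachFin (Finset.range t)
          (fun p hp => lt_of_lt_of_le (Finset.mem_range.mp hp) htN) := by
        ext p; simp [hsdef, Finset.mem_attachFin]
      rw [this, Finset.card_attachFin, Finset.card_range]
    set Bf : Fin n → Finset (Fin (m * n)) :=
      fun i => univ.filter (fun q : Fin (m * n) => (q : ℕ) / m = (i : ℕ)) with hBf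
    have hBcard : ∀ i, (Bf i).card ≤ m := by
      intro i
      have : (Bf i).card ≤ (Finset.range m).card := by
        refine Finset.card_le_card_of_injOn (fun q : Fin (m * n) => (q : ℕ) % m) ?_ ?_
        · intro q _
          exact Finset.mem_range.mpr (Nat.mod_lt _ hm)
        · intro q1 hq1 q2 hq2 he
          simp only [hBf, Finset.mem_coe, Finset.mem_filter] at hq1 hq2
          have e1 := Nat.div_add_mod (q1 : ℕ) m
          have e2 := Nat.div_add_mod (q2 : ℕ) m
          simp only at he
          apply Fin.val_injective
          rw [← e1, ← e2, hq1.2, hq2.2, he]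
      rwa [Finset.card_range] at this
    have hsub : (univ.filter P) ⊆
        (univ ×ˢ s.powersetCard j).biUnion
          (fun x => univ.filter fun π : Equiv.Perm (Fin (m * n)) => ∀ p ∈ x.2, π p ∈ Bf x.1) := by
      intro π hπ
      rw [Finset.mem_filter] at hπ
      have hsup := hπ.2
      obtain ⟨i, _, hi⟩ := Finset.exists_mem_eq_sup univ
        (univ_nonempty_iff.mpr ⟨⟨0, hn⟩⟩)
        (fun i : Fin n =>
          (Finset.univ.filter (fun p : Fin (m * n) =>
            (p : ℕ) < t ∧ (π p : ℕ) / m = (i : ℕ))).card)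
      rw [hP] at hsup
      rw [hsup] at hi
      apply Finset.mem_biUnion.mpr
      refine ⟨(i, univ.filter (fun p : Fin (m * n) =>
        (p : ℕ) < t ∧ (π p : ℕ) / m = (i : ℕ))), ?_, ?_⟩
      · rw [Finset.mem_product]
        constructor
        · exact Finset.mem_univ _
        · rw [Finset.mem_powersetCard]
          refine ⟨?_, hi.symm⟩
          intro p hp
          rw [Finset.mem_filter] at hp
          simp [hsdef, hp.2.1]
      · rw [Finset.mem_filter]
        refine ⟨Finset.mem_univ _, ?_⟩
        intro p hp
        rw [Finset.mem_filter] at hp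
        simp [hBf, hp.2.2]
    have hEbound : (univ.filter P).card
        ≤ n * t.choose j * (m.descFactorial j * (m * n - j).factorial) := by
      calc (univ.filter P).card
          ≤ ((univ ×ˢ s.powersetCard j).biUnion
              (fun x => univ.filter fun π : Equiv.Perm (Fin (m * n)) =>
                ∀ p ∈ x.2, π p ∈ Bf x.1)).card := Finset.card_le_card hsub
        _ ≤ ∑ x ∈ univ ×ˢ s.powersetCard j,
              (univ.filter fun π : Equiv.Perm (Fin (m * n)) =>
                ∀ p ∈ x.2, π p ∈ Bf x.1).card := Finset.card_biUnion_le
        _ ≤ ∑ _x ∈ univ ×ˢ s.powersetCard j,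
              (m.descFactorial j * (m * n - j).factorial) := by
            apply Finset.sum_le_sum
            intro x hx
            rw [Finset.mem_product, Finset.mem_powersetCard] at hx
            exact count_bound (Bf x.1) (hBcard x.1) x.2 hx.2.2
        _ = n * t.choose j * (m.descFactorial j * (m * n - j).factorial) := by
            rw [Finset.sum_const, smul_eq_mul, Finset.card_product, Finset.card_univ,
              Fintype.card_fin, Finset.card_powersetCard, hs]
    have hnat : (univ.filter P).card * ((m * n).choose j)
        ≤ n * t.choose j * m.choose j * (m * n).factorial := by
      calc (univ.filter P).card * ((m * n).choose j)
          ≤ (n * t.choose j * (m.descFactorial j * (m * n - j).factorial)) * ((m * n).choose j) :=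
            Nat.mul_le_mul_right _ hEbound
        _ = n * t.choose j * m.choose j * (m * n).factorial := by
            rw [Nat.descFactorial_eq_factorial_mul_choose,
              ← Nat.choose_mul_factorial_mul_factorial hjN]
            ring
    rw [hcard]
    rw [div_le_div_iff₀ (by positivity) (by exact_mod_cast Nat.choose_pos hjN)]
    calc ((univ.filter P).card : ℝ) * ((m * n).choose j : ℝ)
        = (((univ.filter P).card * ((m * n).choose j) : ℕ) : ℝ) := by push_cast; ring
      _ ≤ ((n * t.choose j * m.choose j * (m * n).factorial : ℕ) : ℝ) := Nat.cast_le.mpr hnat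
      _ = (n : ℝ) * (t.choose j : ℝ) * (m.choose j : ℝ) * ((m * n).factorial : ℝ) := by
          push_cast; ring
  · -- second inequality
    have hcNj : (0:ℝ) < ((m * n).choose j : ℝ) := by exact_mod_cast Nat.choose_pos hjN
    have hcNt : (0:ℝ) < ((m * n).choose t : ℝ) := by exact_mod_cast Nat.choose_pos htN
    have e1 : t.choose j ≤ (m * n) ^ (t - j) := by
      rw [← Nat.choose_symm hjt']
      exact le_trans (Nat.choose_le_pow _ _) (Nat.pow_le_pow_left htN _)
    have e2 : m.choose j ≤ m.choose t * (m * n) ^ (t - j) := by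
      calc m.choose j ≤ m.choose j * (m - j).choose (t - j) :=
            Nat.le_mul_of_pos_right _ (Nat.choose_pos (by omega))
        _ = m.choose t * t.choose j := (Nat.choose_mul (n := m) hjt').symm
        _ ≤ m.choose t * (m * n) ^ (t - j) := Nat.mul_le_mul_left _ e1
    have e3 : (m * n).choose t ≤ (m * n).choose j * (m * n) ^ (t - j) := by
      calc (m * n).choose t ≤ (m * n).choose t * t.choose j :=
            Nat.le_mul_of_pos_right _ (Nat.choose_pos hjt')
        _ = (m * n).choose j * (m * n - j).choose (t - j) := Nat.choose_mul (n := m * n) hjt'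
        _ ≤ (m * n).choose j * (m * n) ^ (t - j) := by
            apply Nat.mul_le_mul_left
            exact le_trans (Nat.choose_le_pow _ _) (Nat.pow_le_pow_left (Nat.sub_le _ _) _)
    have key : t.choose j * m.choose j * ((m * n).choose t)
        ≤ m.choose t * (m * n) ^ (3 * (t - j)) * ((m * n).choose j) := by
      calc t.choose j * m.choose j * ((m * n).choose t)
          ≤ ((m * n) ^ (t - j)) * (m.choose t * (m * n) ^ (t - j))
              * ((m * n).choose j * (m * n) ^ (t - j)) :=
            Nat.mul_le_mul (Nat.mul_le_mul e1 e2) e3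
        _ = m.choose t * (m * n) ^ (3 * (t - j)) * ((m * n).choose j) := by
            rw [show 3 * (t - j) = (t - j) + (t - j) + (t - j) by ring, pow_add, pow_add]
            ring
    rw [div_mul_eq_mul_div, div_le_div_iff₀ hcNj hcNt]
    have keyR : ((t.choose j * m.choose j * ((m * n).choose t) : ℕ) : ℝ)
        ≤ ((m.choose t * (m * n) ^ (3 * (t - j)) * ((m * n).choose j) : ℕ) : ℝ) :=
      Nat.cast_le.mpr key
    push_cast at keyR
    have hn0 : (0:ℝ) ≤ (n : ℝ) := by positivity
    push_cast
    calc (n:ℝ) * (t.choose j : ℝ) * (m.choose j : ℝ) * ((m * n).choose t : ℝ)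
        = (n:ℝ) * ((t.choose j : ℝ) * (m.choose j : ℝ) * ((m * n).choose t : ℝ)) := by ring
      _ ≤ (n:ℝ) * ((m.choose t : ℝ) * ((m:ℝ) * (n:ℝ)) ^ (3 * (t - j)) * ((m * n).choose j : ℝ)) :=
          mul_le_mul_of_nonneg_left keyR hn0
      _ = (n:ℝ) * (m.choose t : ℝ) * ((m:ℝ) * (n:ℝ)) ^ (3 * (t - j)) * ((m * n).choose j : ℝ) := by
          ring
end
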